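/- arXiv:1108.1505 — 5 statements merged into one kernel-verified Lean document; each statement's English description precedes it below -/
import Mathlib

section
/- Let X be an absolutely continuous real random variable with cumulative distribution function F satisfying F(0) = 0, and let b > 0 with F(b) > 0. Define F1(x) = ∫₀ˣ F(t) dt and F2(x) = ∫₀ˣ F1(t) dt. Then the conditional variance satisfies Var(X | 0 ≤ X ≤ b) = 2·F2(b)/F(b) − F1(b)²/F(b)². -/
/-!
Since the variance is invariant under `X ↦ b - X`, it suffices to compute the first two moments
of `b - X` on `[0, b]`. Writing `b - x` and `(b - x)² / 2` as integrals of `1` and `t - x` over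
`t ∈ [x, b]` and swapping the order of integration (Fubini on the triangle `0 ≤ x ≤ t ≤ b`) gives
`∫_{[0,b]} (b - x) dμ = ∫₀ᵇ μ[0, t] dt = F₁(b)` and
`∫_{[0,b]} (b - x)² dμ = 2 ∫₀ᵇ ∫_{[0,t]} (t - x) dμ dt = 2 F₂(b)`,
where `μ[0, t] = F(t)` because `F(0) = 0`.
-/

open MeasureTheory ProbabilityTheory Set Function

theorem setIntegral_Icc_setIntegral_Icc_swap (μ ν : Measure ℝ) [IsLocallyFiniteMeasure μ]
    [IsLocallyFiniteMeasure ν] {g : ℝ → ℝ → ℝ} {a b : ℝ}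
    (hg : ContinuousOn (uncurry g) (Icc a b ×ˢ Icc a b)) :
    ∫ x in Icc a b, ∫ y in Icc x b, g x y ∂ν ∂μ = ∫ y in Icc a b, ∫ x in Icc a y, g x y ∂μ ∂ν := by
  set f := {z : ℝ × ℝ | z.1 ≤ z.2}.indicator (uncurry g)
  have hf : IntegrableOn f (Icc a b ×ˢ Icc a b) (μ.prod ν) :=
    (hg.integrableOn_compact (isCompact_Icc.prod isCompact_Icc)).indicator
      (measurableSet_le measurable_fst measurable_snd)
  have hf_swap : IntegrableOn (f ∘ Prod.swap) (Icc a b ×ˢ Icc a b) (ν.prod μ) := by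
    rw [IntegrableOn, ← Measure.prod_restrict] at hf ⊢
    exact hf.swap
  have hleft : ∀ x ∈ Icc a b, ∫ y in Icc a b, f (x, y) ∂ν = ∫ y in Icc x b, g x y ∂ν := by
    intro x hx
    have hfx : (fun y => f (x, y)) = (Ici x).indicator (g x) := by
      ext y; simp [f, indicator]
    have hset : Icc a b ∩ Ici x = Icc x b := by
      ext y
      exact ⟨fun h => ⟨h.2, h.1.2⟩, fun h => ⟨⟨hx.1.trans h.1, h.2⟩, h.1⟩⟩
    rw [hfx, setIntegral_indicator measurableSet_Ici, hset]
  have hright : ∀ y ∈ Icc a b, ∫ x in Icc a b, f (x, y) ∂μ = ∫ x in Icc a y, g x y ∂μ := by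
    intro y hy
    have hfy : (fun x => f (x, y)) = (Iic y).indicator (fun x => g x y) := by
      ext x; simp [f, indicator]
    have hset : Icc a b ∩ Iic y = Icc a y := by
      ext x
      exact ⟨fun h => ⟨h.1.1, h.2⟩, fun h => ⟨⟨h.1, h.2.trans hy.2⟩, h.2⟩⟩
    rw [hfy, setIntegral_indicator measurableSet_Iic, hset]
  rw [← setIntegral_congr_fun measurableSet_Icc hleft, ← setIntegral_prod f hf,
    ← setIntegral_prod_swap]
  refine (setIntegral_prod (f ∘ Prod.swap) hf_swap).trans ?_
  exact setIntegral_congr_fun measurableSet_Icc hright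

theorem setIntegral_Icc_sub_eq_intervalIntegral (μ : Measure ℝ) [IsLocallyFiniteMeasure μ]
    {a b : ℝ} (hab : a ≤ b) :
    ∫ x in Icc a b, (b - x) ∂μ = ∫ t in a..b, μ.real (Icc a t) := by
  have h := setIntegral_Icc_setIntegral_Icc_swap μ volume (g := fun _ _ => (1 : ℝ))
    (a := a) (b := b) continuousOn_const
  simp only [setIntegral_const, smul_eq_mul, mul_one, Real.volume_real_Icc] at h
  rw [intervalIntegral.integral_of_le hab, ← integral_Icc_eq_integral_Ioc, ← h]
  exact setIntegral_congr_fun measurableSet_Icc fun x hx => (max_eq_left (sub_nonneg.2 hx.2)).symm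

theorem setIntegral_Icc_sub_sq_eq_intervalIntegral (μ : Measure ℝ) [IsLocallyFiniteMeasure μ]
    {a b : ℝ} (hab : a ≤ b) :
    ∫ x in Icc a b, (b - x) ^ 2 ∂μ = 2 * ∫ t in a..b, ∫ x in Icc a t, (t - x) ∂μ := by
  have h := setIntegral_Icc_setIntegral_Icc_swap μ volume (g := fun x t => t - x)
    (a := a) (b := b) (by fun_prop)
  rw [intervalIntegral.integral_of_le hab, ← integral_Icc_eq_integral_Ioc, ← h,
    ← integral_const_mul]
  refine setIntegral_congr_fun measurableSet_Icc fun x hx => ?_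
  rw [integral_Icc_eq_integral_Ioc, ← intervalIntegral.integral_of_le hx.2,
    intervalIntegral.integral_comp_sub_right (fun t => t), sub_self, integral_id]
  ring

theorem measure_Icc_eq_measure_Iic {μ : Measure ℝ} {a t : ℝ} (h : μ (Iio a) = 0) (hat : a ≤ t) :
    μ (Icc a t) = μ (Iic t) := by
  refine le_antisymm (measure_mono Icc_subset_Iic_self) ?_
  calc μ (Iic t) = μ (Iio a ∪ Icc a t) := by rw [Iio_union_Icc_eq_Iic hat]
    _ ≤ μ (Iio a) + μ (Icc a t) := measure_union_le _ _
    _ = μ (Icc a t) := by rw [h, zero_add]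

theorem variance_cond_eq {Ω : Type*} [MeasurableSpace Ω] (μ : Measure Ω) [IsFiniteMeasure μ]
    {s : Set Ω} (hμs : μ s ≠ 0) {X : Ω → ℝ} (hX : MemLp X 2 (μ.restrict s)) :
    Var[X; μ[|s]] = (∫ ω in s, X ω ^ 2 ∂μ) / μ.real s - ((∫ ω in s, X ω ∂μ) / μ.real s) ^ 2 := by
  have := cond_isProbabilityMeasure (μ := μ) hμs
  have hcond : ∀ f : Ω → ℝ, ∫ ω, f ω ∂μ[|s] = (∫ ω in s, f ω ∂μ) / μ.real s := fun f => by
    rw [ProbabilityTheory.cond, integral_smul_measure, ENNReal.toReal_inv, smul_eq_mul,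
      measureReal_def, inv_mul_eq_div]
  have hX' : MemLp X 2 μ[|s] := hX.smul_measure (ENNReal.inv_ne_top.2 hμs)
  rw [variance_eq_sub hX']
  simp only [Pi.pow_apply, hcond]

theorem conditional_variance_eq_general (μ : Measure ℝ) [IsProbabilityMeasure μ]
    (F F1 F2 : ℝ → ℝ)
    (hF : ∀ x, F x = (μ (Iic x)).toReal)
    (hF1 : ∀ x, F1 x = ∫ t in (0:ℝ)..x, F t)
    (hF2 : ∀ x, F2 x = ∫ t in (0:ℝ)..x, F1 t)
    (hF0 : F 0 = 0) (b : ℝ) (hb : 0 < b) (hFb : 0 < F b) :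
    variance id (μ[|Icc 0 b]) = 2 * F2 b / F b - (F1 b) ^ 2 / (F b) ^ 2 := by
  have hIio : μ (Iio 0) = 0 := by
    have hIic : μ (Iic 0) = 0 := by
      rw [hF, ENNReal.toReal_eq_zero_iff] at hF0
      exact hF0.resolve_right (measure_ne_top μ _)
    exact measure_mono_null Iio_subset_Iic_self hIic
  have hF_eq : ∀ t, 0 ≤ t → μ.real (Icc 0 t) = F t := fun t ht => by
    rw [measureReal_def, measure_Icc_eq_measure_Iic hIio ht, hF]
  have hF1_eq : ∀ t, 0 ≤ t → ∫ x in Icc 0 t, (t - x) ∂μ = F1 t := fun t ht => by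
    rw [setIntegral_Icc_sub_eq_intervalIntegral μ ht, hF1]
    refine intervalIntegral.integral_congr fun s hs => hF_eq s ?_
    exact (uIcc_of_le ht ▸ hs).1
  have hF2_eq : ∫ x in Icc 0 b, (b - x) ^ 2 ∂μ = 2 * F2 b := by
    rw [setIntegral_Icc_sub_sq_eq_intervalIntegral μ hb.le, hF2]
    refine congrArg _ (intervalIntegral.integral_congr fun t ht => hF1_eq t ?_)
    exact (uIcc_of_le hb.le ▸ ht).1
  have hμb : μ (Icc 0 b) ≠ 0 := fun h => by
    rw [← hF_eq b hb.le, measureReal_def, h, ENNReal.toReal_zero] at hFb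
    exact hFb.false
  have hX : MemLp (fun x => b - x) 2 (μ.restrict (Icc 0 b)) :=
    memLp_of_bounded ((ae_restrict_mem measurableSet_Icc).mono fun x hx =>
      ⟨sub_nonneg.2 hx.2, sub_le_self b hx.1⟩) (by fun_prop) 2
  have := cond_isProbabilityMeasure (μ := μ) hμb
  rw [← variance_const_sub aestronglyMeasurable_id b]
  simp only [id_eq]
  rw [variance_cond_eq μ hμb hX, hF2_eq, hF1_eq b hb.le, hF_eq b hb.le]
  field_simp

/-- For an absolutely continuous real random variable with
cumulative distribution function `F` satisfying `F 0 = 0`, and `b > 0` with `F b > 0`,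
the conditional variance satisfies
`Var(X | 0 ≤ X ≤ b) = 2 F₂(b)/F(b) - F₁(b)²/F(b)²`,
where `F₁ x = ∫₀ˣ F t dt` and `F₂ x = ∫₀ˣ F₁ t dt`. -/
theorem conditional_variance_eq (μ : Measure ℝ) [IsProbabilityMeasure μ]
    (hac : μ ≪ volume)
    (F F1 F2 : ℝ → ℝ)
    (hF : ∀ x, F x = (μ (Iic x)).toReal)
    (hF1 : ∀ x, F1 x = ∫ t in (0:ℝ)..x, F t)
    (hF2 : ∀ x, F2 x = ∫ t in (0:ℝ)..x, F1 t)
    (hF0 : F 0 = 0) (b : ℝ) (hb : 0 < b) (hFb : 0 < F b) :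
    variance id (μ[|Icc 0 b]) = 2 * F2 b / F b - (F1 b) ^ 2 / (F b) ^ 2 :=
  conditional_variance_eq_general μ F F1 F2 hF hF1 hF2 hF0 b hb hFb
end

section
/- Let X be an integer-valued random variable with probability mass function p(k) = P(X = k), and let Y be the absolutely continuous random variable with density f(y) = Σₖ p(k)·1(k − 0.5 < y < k + 0.5). Then for any integers a ≤ b with P(a ≤ X ≤ b) > 0: E(X | a ≤ X ≤ b) = E(Y | a − 0.5 < Y ≤ b + 0.5), E(X² | a ≤ X ≤ b) = E(Y² | a − 0.5 < Y ≤ b + 0.5) − 1/12, and Var(X | a ≤ X ≤ b) = Var(Y | a − 0.5 < Y ≤ b + 0.5) − 1/12. -/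
/-!
Both conditionings normalise by the same mass `∑_{a ≤ k ≤ b} p k`: `X` puts mass `p k` at `k`,
while on the cell `round ⁻¹' {k} = [k - 1/2, k + 1/2)` the law of `Y` is `p k` times Lebesgue
measure. Hence the integral of `h(Y)` over `(a - 1/2, b + 1/2]` is `∑ p k ∫_{k-1/2}^{k+1/2} h`,
which is `∑ p k k` for `h y = y` and `∑ p k (k² + 1/12)` for `h y = y²`, `1/12` being the
variance of the uniform law on a unit interval. The variance identity follows from these two.
-/

open MeasureTheory ProbabilityTheory Set
open scoped ENNReal

section Round
variable {α : Type*} [Field α] [LinearOrder α] [IsStrictOrderedRing α] [FloorRing α]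

theorem preimage_round_Icc (a b : ℤ) :
    round ⁻¹' Icc a b = Ico ((a : α) - 1 / 2) ((b : α) + 1 / 2) := by
  ext y
  simp only [mem_preimage, mem_Icc, mem_Ico, round_eq, Int.le_floor, Int.floor_le_iff]
  constructor <;> rintro ⟨h1, h2⟩ <;> constructor <;> linarith

theorem preimage_round_singleton (k : ℤ) :
    round ⁻¹' {k} = Ico ((k : α) - 1 / 2) ((k : α) + 1 / 2) := by
  ext y; exact round_eq_iff

end Round

theorem measurable_round : Measurable (round : ℝ → ℤ) :=
  measurable_to_countable' fun k => by
    rw [preimage_round_singleton]; exact measurableSet_Ico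

variable {E : Type*} [NormedAddCommGroup E]

theorem integrableOn_preimage_round_singleton {F : ℤ → ℝ → E} (k : ℤ) (hF : Continuous (F k)) :
    IntegrableOn (fun y => F (round y) y) (round ⁻¹' {k}) := by
  rw [preimage_round_singleton]
  refine (hF.integrableOn_Icc.mono_set Ico_subset_Icc_self).congr_fun (fun y hy => ?_)
    measurableSet_Ico
  rw [round_eq_iff.2 hy]

theorem setIntegral_preimage_round_singleton [NormedSpace ℝ E] {F : ℤ → ℝ → E} (k : ℤ) :
    ∫ y in round ⁻¹' {k}, F (round y) y = ∫ y in ((k : ℝ) - 1 / 2)..((k : ℝ) + 1 / 2), F k y := by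
  rw [setIntegral_congr_fun (measurable_round (measurableSet_singleton k))
      (fun y (hy : round y = k) => by rw [hy]),
    preimage_round_singleton, integral_Ico_eq_integral_Ioo,
    intervalIntegral.integral_of_le (by linarith), integral_Ioc_eq_integral_Ioo]

theorem setIntegral_withDensity_round {p : ℤ → ℝ} (hp : ∀ k, 0 ≤ p k) {h : ℝ → ℝ}
    (hh : Continuous h) (a b : ℤ) :
    ∫ y in Ioc ((a : ℝ) - 1 / 2) ((b : ℝ) + 1 / 2), h y
        ∂volume.withDensity (fun y => ENNReal.ofReal (p (round y))) =
      ∑ k ∈ Finset.Icc a b, p k * ∫ y in ((k : ℝ) - 1 / 2)..((k : ℝ) + 1 / 2), h y := by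
  have hdens : Measurable fun y : ℝ => ENNReal.ofReal (p (round y)) :=
    ENNReal.measurable_ofReal.comp ((measurable_of_countable p).comp measurable_round)
  -- The endpoints are null, so we may pass to `Ico = round ⁻¹' Icc a b` and split into fibres.
  rw [setIntegral_withDensity_eq_setIntegral_toReal_smul hdens
      (ae_of_all _ fun _ => ENNReal.ofReal_lt_top) _ measurableSet_Ioc,
    integral_Ioc_eq_integral_Ioo, ← integral_Ico_eq_integral_Ioo, ← preimage_round_Icc,
    ← Finset.coe_Icc, ← Finset.set_biUnion_preimage_singleton,
    integral_biUnion_finset _ (fun k _ => measurable_round (measurableSet_singleton k))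
      (pairwiseDisjoint_fiber round _)
      (fun k _ => integrableOn_preimage_round_singleton
        (F := fun j y => (ENNReal.ofReal (p j)).toReal • h y) k (by fun_prop))]
  refine Finset.sum_congr rfl fun k _ => ?_
  rw [setIntegral_preimage_round_singleton (F := fun j y => (ENNReal.ofReal (p j)).toReal • h y),
    intervalIntegral.integral_smul, ENNReal.toReal_ofReal (hp k), smul_eq_mul]

theorem restrict_sum_smul_dirac {ι α : Type*} [MeasurableSpace α] (c : ι → ℝ≥0∞)
    (x : ι → α) {t : Set α} (ht : MeasurableSet t) {s : Finset ι} (hs : ∀ i, x i ∈ t ↔ i ∈ s) :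
    (Measure.sum fun i => c i • Measure.dirac (x i)).restrict t =
      ∑ i ∈ s, c i • Measure.dirac (x i) := by
  ext u hu
  rw [Measure.restrict_apply hu, Measure.sum_apply _ (hu.inter ht), Measure.coe_finsetSum,
    Finset.sum_apply, tsum_eq_sum fun i hi => ?_]
  · refine Finset.sum_congr rfl fun i hi => ?_
    simp [Measure.dirac_apply' _ hu, Measure.dirac_apply' _ (hu.inter ht), inter_indicator_one,
      (hs i).2 hi]
  · simp [Measure.dirac_apply' _ (hu.inter ht), mt (hs i).1 hi]

theorem integral_finset_sum_smul_dirac [NormedSpace ℝ E] [CompleteSpace E] {ι α : Type*}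
    [MeasurableSpace α] [MeasurableSingletonClass α] (s : Finset ι) {w : ι → ℝ}
    (hw : ∀ i ∈ s, 0 ≤ w i) (x : ι → α) (f : α → E) :
    ∫ y, f y ∂(∑ i ∈ s, ENNReal.ofReal (w i) • Measure.dirac (x i)) = ∑ i ∈ s, w i • f (x i) := by
  rw [integral_finsetSum_measure fun i _ =>
    (integrable_dirac enorm_lt_top).smul_measure ENNReal.ofReal_ne_top]
  refine Finset.sum_congr rfl fun i hi => ?_
  rw [integral_smul_measure, integral_dirac, ENNReal.toReal_ofReal (hw i hi)]

theorem integral_cond_eq_inv_smul [NormedSpace ℝ E] {Ω : Type*} [MeasurableSpace Ω]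
    (μ : Measure Ω) (s : Set Ω) (f : Ω → E) :
    ∫ x, f x ∂μ[|s] = (μ.real s)⁻¹ • ∫ x in s, f x ∂μ := by
  rw [ProbabilityTheory.cond, integral_smul_measure, ENNReal.toReal_inv, measureReal_def]

theorem isProbabilityMeasure_cond_of_measureReal_pos {Ω : Type*} [MeasurableSpace Ω]
    {μ : Measure Ω} {s : Set Ω} (h : 0 < μ.real s) :
    IsProbabilityMeasure μ[|s] :=
  have h' := ENNReal.toReal_pos_iff.1 h
  cond_isProbabilityMeasure_of_finite h'.1.ne' h'.2.ne

theorem memLp_id_cond_of_isBounded {μ : Measure ℝ} {s : Set ℝ} (hs : MeasurableSet s)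
    (hb : Bornology.IsBounded s) (q : ℝ≥0∞) : MemLp id q μ[|s] := by
  obtain ⟨r, hr⟩ := hb.subset_closedBall 0
  refine MemLp.of_bound measurable_id.aestronglyMeasurable r ?_
  filter_upwards [ae_cond_mem hs] with x hx
  simpa using hr hx

theorem integral_id_centered_unit (c : ℝ) : ∫ y in (c - 1 / 2)..(c + 1 / 2), y = c := by
  rw [integral_id]; ring

theorem integral_sq_centered_unit (c : ℝ) :
    ∫ y in (c - 1 / 2)..(c + 1 / 2), y ^ 2 = c ^ 2 + 1 / 12 := by
  rw [integral_pow]; ring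

theorem discrete_continuous_conditional_moments_general
    (p : ℤ → ℝ) (hp0 : ∀ k, 0 ≤ p k)
    (μX μY : Measure ℝ)
    (hX : μX = Measure.sum (fun k : ℤ => ENNReal.ofReal (p k) • Measure.dirac (k : ℝ)))
    (hY : μY = volume.withDensity (fun y => ENNReal.ofReal (p (round y))))
    (a b : ℤ) (hpos : 0 < μX (Icc (a : ℝ) (b : ℝ))) :
    (∫ x, x ∂(μX[|Icc (a : ℝ) (b : ℝ)])) =
      (∫ y, y ∂(μY[|Ioc ((a : ℝ) - 0.5) ((b : ℝ) + 0.5)])) ∧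
    (∫ x, x ^ 2 ∂(μX[|Icc (a : ℝ) (b : ℝ)])) =
      (∫ y, y ^ 2 ∂(μY[|Ioc ((a : ℝ) - 0.5) ((b : ℝ) + 0.5)])) - 1 / 12 ∧
    variance id (μX[|Icc (a : ℝ) (b : ℝ)]) =
      variance id (μY[|Ioc ((a : ℝ) - 0.5) ((b : ℝ) + 0.5)]) - 1 / 12 := by
  rw [show (0.5 : ℝ) = 1 / 2 by norm_num]
  set F := Finset.Icc a b
  have hres :
      μX.restrict (Icc (a : ℝ) b) = ∑ k ∈ F, ENNReal.ofReal (p k) • Measure.dirac (k : ℝ) :=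
    hX ▸ restrict_sum_smul_dirac _ _ measurableSet_Icc (by simp [F])
  have hXint (f : ℝ → ℝ) : ∫ x in Icc (a : ℝ) b, f x ∂μX = ∑ k ∈ F, p k * f k := by
    rw [hres, integral_finset_sum_smul_dirac _ (fun k _ => hp0 k)]
    rfl
  have hYint {h : ℝ → ℝ} (hh : Continuous h) :
      ∫ y in Ioc ((a : ℝ) - 1 / 2) (b + 1 / 2), h y ∂μY =
        ∑ k ∈ F, p k * ∫ y in ((k : ℝ) - 1 / 2)..((k : ℝ) + 1 / 2), h y :=
    hY ▸ setIntegral_withDensity_round hp0 hh a b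
  have hXmass : μX.real (Icc (a : ℝ) b) = ∑ k ∈ F, p k := by simpa using hXint 1
  have hYmass : μY.real (Ioc ((a : ℝ) - 1 / 2) (b + 1 / 2)) = ∑ k ∈ F, p k := by
    simpa [← two_mul] using hYint (h := fun _ => 1) continuous_const
  -- `μX.real` vanishes on sets of infinite measure, so `hpos` alone does not give `hS`.
  have hXfin : μX (Icc (a : ℝ) b) ≠ ∞ := by
    rw [← Measure.restrict_apply_univ, hres]
    simp
  have hS : 0 < ∑ k ∈ F, p k := hXmass ▸ ENNReal.toReal_pos hpos.ne' hXfin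
  have hmean : ∫ x, x ∂μX[|Icc (a : ℝ) b] = ∫ y, y ∂μY[|Ioc ((a : ℝ) - 1 / 2) (b + 1 / 2)] := by
    simp only [integral_cond_eq_inv_smul, hXint, hYint (h := fun y => y) continuous_id, hXmass,
      hYmass, integral_id_centered_unit]
  have hsq : ∫ x, x ^ 2 ∂μX[|Icc (a : ℝ) b] =
      ∫ y, y ^ 2 ∂μY[|Ioc ((a : ℝ) - 1 / 2) (b + 1 / 2)] - 1 / 12 := by
    simp only [integral_cond_eq_inv_smul, hXint, hYint (h := fun y => y ^ 2) (continuous_pow 2),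
      hXmass, hYmass, integral_sq_centered_unit, mul_add, Finset.sum_add_distrib,
      ← Finset.sum_mul, smul_eq_mul]
    field_simp
    ring
  have := isProbabilityMeasure_cond_of_measureReal_pos (hXmass ▸ hS)
  have := isProbabilityMeasure_cond_of_measureReal_pos (hYmass ▸ hS)
  refine ⟨hmean, hsq, ?_⟩
  rw [variance_eq_sub (memLp_id_cond_of_isBounded measurableSet_Icc (Metric.isBounded_Icc _ _) 2),
    variance_eq_sub (memLp_id_cond_of_isBounded measurableSet_Ioc (Metric.isBounded_Ioc _ _) 2)]
  simp only [Pi.pow_apply, id, hmean, hsq]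
  ring

/-- Let `X` be integer-valued with probability mass function `p`,
and let `Y` be the absolutely continuous random variable that is uniform with mass
`p k` on each interval `(k - 0.5, k + 0.5)` (density `y ↦ p (round y)`).
Then for integers `a ≤ b` with `P(a ≤ X ≤ b) > 0`:
`E(X | a ≤ X ≤ b) = E(Y | a - 0.5 < Y ≤ b + 0.5)`,
`E(X² | a ≤ X ≤ b) = E(Y² | a - 0.5 < Y ≤ b + 0.5) - 1/12`, and
`Var(X | a ≤ X ≤ b) = Var(Y | a - 0.5 < Y ≤ b + 0.5) - 1/12`. -/
theorem discrete_continuous_conditional_moments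
    (p : ℤ → ℝ) (hp0 : ∀ k, 0 ≤ p k) (hp1 : ∑' k : ℤ, p k = 1)
    (μX μY : Measure ℝ)
    (hX : μX = Measure.sum (fun k : ℤ => ENNReal.ofReal (p k) • Measure.dirac (k : ℝ)))
    (hY : μY = volume.withDensity (fun y => ENNReal.ofReal (p (round y))))
    (a b : ℤ) (hab : a ≤ b) (hpos : 0 < μX (Icc (a : ℝ) (b : ℝ))) :
    (∫ x, x ∂(μX[|Icc (a : ℝ) (b : ℝ)])) =
      (∫ y, y ∂(μY[|Ioc ((a : ℝ) - 0.5) ((b : ℝ) + 0.5)])) ∧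
    (∫ x, x ^ 2 ∂(μX[|Icc (a : ℝ) (b : ℝ)])) =
      (∫ y, y ^ 2 ∂(μY[|Ioc ((a : ℝ) - 0.5) ((b : ℝ) + 0.5)])) - 1 / 12 ∧
    variance id (μX[|Icc (a : ℝ) (b : ℝ)]) =
      variance id (μY[|Ioc ((a : ℝ) - 0.5) ((b : ℝ) + 0.5)]) - 1 / 12 :=
  discrete_continuous_conditional_moments_general p hp0 μX μY hX hY a b hpos
end

section
/- Let X be an integer-valued random variable with a geometric distribution, P(X = k) = (1 − q)·q^k for k = 0, 1, 2, … and some 0 < q < 1. Then the conditional variance Var(X | X ∈ A) is partially monotonic in intervals: Var(X | X ∈ A) ≤ Var(X | X ∈ B) for any finite intervals A ⊂ B with P(X ∈ A) > 0. -/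
/-!
Conditioned on a block `{m, …, m + N}` of consecutive integers, the geometric law is, by
memorylessness, the law with weights `q ^ i` on `{0, …, N}` shifted by `m`. Hence
`Var(X | X ∈ A)` depends only on the number `N + 1` of integers in `A`, and equals
`q / (1 - q) ^ 2 - (N + 1) ^ 2 q ^ (N + 1) / (1 - q ^ (N + 1)) ^ 2`. Monotonicity in `N` reduces
to `(n + 1) √q (1 - q ^ n) ≤ n (1 - q ^ (n + 1))`, which for `q = e^(-2s)` says that
`sinh (n s) / n` increases with `n`; with `r = √q` it follows by induction on `n`.
-/

open MeasureTheory ProbabilityTheory Set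

section WeightedVariance

variable {ι : Type*} (s : Finset ι) (w x : ι → ℝ)

noncomputable def weightedMean : ℝ := (∑ i ∈ s, w i * x i) / ∑ i ∈ s, w i

noncomputable def weightedVariance : ℝ :=
  (∑ i ∈ s, w i * (x i - weightedMean s w x) ^ 2) / ∑ i ∈ s, w i

variable {s w x}

lemma weightedVariance_eq (hW : ∑ i ∈ s, w i ≠ 0) :
    weightedVariance s w x =
      ((∑ i ∈ s, w i * x i ^ 2) * (∑ i ∈ s, w i) - (∑ i ∈ s, w i * x i) ^ 2) /
        (∑ i ∈ s, w i) ^ 2 := by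
  have h : ∑ i ∈ s, w i * (x i - weightedMean s w x) ^ 2 =
      ∑ i ∈ s, w i * x i ^ 2 - 2 * weightedMean s w x * ∑ i ∈ s, w i * x i
        + weightedMean s w x ^ 2 * ∑ i ∈ s, w i := by
    simp only [Finset.mul_sum, ← Finset.sum_sub_distrib, ← Finset.sum_add_distrib]
    exact Finset.sum_congr rfl fun i _ => by ring
  rw [weightedVariance, h, weightedMean]
  field_simp
  ring

lemma weightedVariance_const_mul (c : ℝ) (hc : c ≠ 0) :
    weightedVariance s (fun i => c * w i) x = weightedVariance s w x := by
  simp only [weightedVariance, weightedMean, mul_assoc, ← Finset.mul_sum,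
    mul_div_mul_left _ _ hc]

lemma weightedVariance_add_const (a : ℝ) (hW : ∑ i ∈ s, w i ≠ 0) :
    weightedVariance s w (fun i => x i + a) = weightedVariance s w x := by
  have hmean : weightedMean s w (fun i => x i + a) = weightedMean s w x + a := by
    simp only [weightedMean, mul_add, Finset.sum_add_distrib, ← Finset.sum_mul]
    field_simp
  simp only [weightedVariance, hmean, add_sub_add_right_eq_sub]

lemma weightedVariance_map {κ : Type*} (e : κ ↪ ι) (t : Finset κ) :
    weightedVariance (t.map e) w x = weightedVariance t (w ∘ e) (x ∘ e) := by
  simp [weightedVariance, weightedMean]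

end WeightedVariance

lemma one_sub_mul_sum_range_pow (q : ℝ) (N : ℕ) :
    (1 - q) * ∑ i ∈ Finset.range (N + 1), q ^ i = 1 - q ^ (N + 1) := by
  induction N with
  | zero => simp
  | succ N ih =>
    rw [Finset.sum_range_succ]
    linear_combination ih

lemma one_sub_sq_mul_sum_range_mul_pow (q : ℝ) (N : ℕ) :
    (1 - q) ^ 2 * ∑ i ∈ Finset.range (N + 1), q ^ i * i =
      q - (N + 1) * q ^ (N + 1) + N * q ^ (N + 2) := by
  induction N with
  | zero => simp
  | succ N ih =>
    rw [Finset.sum_range_succ]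
    push_cast
    linear_combination ih

lemma one_sub_cube_mul_sum_range_sq_mul_pow (q : ℝ) (N : ℕ) :
    (1 - q) ^ 3 * ∑ i ∈ Finset.range (N + 1), q ^ i * (i : ℝ) ^ 2 =
      q * (1 + q) - (N + 1) ^ 2 * q ^ (N + 1) + (2 * N ^ 2 + 2 * N - 1) * q ^ (N + 2)
        - N ^ 2 * q ^ (N + 3) := by
  induction N with
  | zero => simp; ring
  | succ N ih =>
    rw [Finset.sum_range_succ]
    push_cast
    linear_combination ih

noncomputable def truncGeomVariance (q : ℝ) (N : ℕ) : ℝ :=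
  weightedVariance (Finset.range (N + 1)) (q ^ ·) (↑·)

lemma truncGeomVariance_eq {q : ℝ} {N : ℕ} (hq : q ^ (N + 1) ≠ 1) :
    truncGeomVariance q N =
      q / (1 - q) ^ 2 - (N + 1) ^ 2 * q ^ (N + 1) / (1 - q ^ (N + 1)) ^ 2 := by
  set W := ∑ i ∈ Finset.range (N + 1), q ^ i
  set M₁ := ∑ i ∈ Finset.range (N + 1), q ^ i * (i : ℝ)
  set M₂ := ∑ i ∈ Finset.range (N + 1), q ^ i * (i : ℝ) ^ 2
  have hW : (1 - q) * W = 1 - q ^ (N + 1) := one_sub_mul_sum_range_pow q N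
  have hx : 1 - q ^ (N + 1) ≠ 0 := sub_ne_zero.mpr hq.symm
  have hq1 : 1 - q ≠ 0 := left_ne_zero_of_mul (hW ▸ hx)
  have hW0 : W ≠ 0 := right_ne_zero_of_mul (hW ▸ hx)
  have hE : (1 - q) ^ 4 * (M₂ * W - M₁ ^ 2) =
      q * (1 - q ^ (N + 1)) ^ 2 - (N + 1) ^ 2 * q ^ (N + 1) * (1 - q) ^ 2 := by
    rw [show (1 - q) ^ 4 * (M₂ * W - M₁ ^ 2) =
        (1 - q) ^ 3 * M₂ * ((1 - q) * W) - ((1 - q) ^ 2 * M₁) ^ 2 by ring,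
      one_sub_cube_mul_sum_range_sq_mul_pow, one_sub_sq_mul_sum_range_mul_pow, hW]
    ring
  calc truncGeomVariance q N = (M₂ * W - M₁ ^ 2) / W ^ 2 := weightedVariance_eq hW0
    _ = (1 - q) ^ 4 * (M₂ * W - M₁ ^ 2) / ((1 - q) ^ 2 * ((1 - q) * W) ^ 2) := by
      field_simp
    _ = _ := by
      rw [hE, hW]
      field_simp

lemma succ_mul_mul_one_sub_pow_le {r : ℝ} (hr0 : 0 ≤ r) (hr1 : r ≤ 1) (n : ℕ) :
    (n + 1) * r * (1 - r ^ (2 * n)) ≤ n * (1 - r ^ (2 * n + 2)) := by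
  induction n with
  | zero => simp
  | succ n ih =>
    have hstep : 0 ≤ (n + 1) * (1 - r) ^ 2 * (1 - r ^ (2 * n + 2)) := by
      have : r ^ (2 * n + 2) ≤ 1 := pow_le_one₀ hr0 hr1
      have : 0 ≤ 1 - r ^ (2 * n + 2) := by linarith
      positivity
    -- the gap `D n := n (1 - r ^ (2n + 2)) - (n + 1) r (1 - r ^ (2n))` satisfies
    -- `D (n + 1) = r D n + (n + 1) (1 - r) ^ 2 (1 - r ^ (2n + 2))`
    push_cast
    linear_combination mul_le_mul_of_nonneg_left ih hr0 + hstep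

lemma succ_sq_mul_mul_one_sub_pow_sq_le {q : ℝ} (hq0 : 0 ≤ q) (hq1 : q ≤ 1) (n : ℕ) :
    (n + 1) ^ 2 * q * (1 - q ^ n) ^ 2 ≤ n ^ 2 * (1 - q ^ (n + 1)) ^ 2 := by
  set r := √q
  have hr0 : 0 ≤ r := Real.sqrt_nonneg q
  have hr1 : r ≤ 1 := Real.sqrt_le_one.mpr hq1
  have hrq : r ^ 2 = q := Real.sq_sqrt hq0
  have key := succ_mul_mul_one_sub_pow_le hr0 hr1 n
  have hlhs : 0 ≤ (n + 1) * r * (1 - r ^ (2 * n)) := by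
    have := pow_le_one₀ hr0 hr1 (n := 2 * n)
    have : 0 ≤ 1 - r ^ (2 * n) := by linarith
    positivity
  rw [← hrq, ← pow_mul, ← pow_mul]
  calc _ = ((n + 1) * r * (1 - r ^ (2 * n))) ^ 2 := by ring
    _ ≤ (n * (1 - r ^ (2 * n + 2))) ^ 2 := pow_le_pow_left₀ hlhs key 2
    _ = _ := by ring

lemma truncGeomVariance_mono {q : ℝ} (hq0 : 0 ≤ q) (hq1 : q < 1) :
    Monotone (truncGeomVariance q) := by
  refine monotone_nat_of_le_succ fun N => ?_
  have hx (n : ℕ) : q ^ (n + 1) < 1 := pow_lt_one₀ hq0 hq1 n.succ_ne_zero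
  rw [truncGeomVariance_eq (hx N).ne, truncGeomVariance_eq (hx (N + 1)).ne]
  gcongr ?_ - ?_
  rw [div_le_div_iff₀ (pow_pos (sub_pos.mpr (hx _)) 2) (pow_pos (sub_pos.mpr (hx _)) 2)]
  have key := succ_sq_mul_mul_one_sub_pow_sq_le hq0 hq1.le (N + 1)
  rw [pow_succ q (N + 1)] at key ⊢
  push_cast at key ⊢
  linear_combination mul_le_mul_of_nonneg_left key (pow_nonneg hq0 (N + 1))

lemma weightedVariance_geometric_Icc {q : ℝ} (hq0 : 0 < q) (hq1 : q < 1) (m N : ℕ) :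
    weightedVariance (Finset.Icc m (m + N)) (fun k => (1 - q) * q ^ k) (↑·) =
      truncGeomVariance q N := by
  have hW : ∑ i ∈ Finset.range (N + 1), q ^ i ≠ 0 :=
    (Finset.sum_pos (fun i _ => pow_pos hq0 i) Finset.nonempty_range_add_one).ne'
  have hIcc : Finset.Icc m (m + N) = (Finset.range (N + 1)).map (addLeftEmbedding m) := by
    rw [Nat.range_succ_eq_Icc_zero, Finset.map_add_left_Icc, add_zero]
  calc _ = weightedVariance (Finset.range (N + 1)) (fun i => (1 - q) * q ^ m * q ^ i)
          (fun i => (i : ℝ) + m) := by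
        rw [hIcc, weightedVariance_map]
        congr 1 with i
        · simp [pow_add, mul_assoc]
        · simp [add_comm]
    _ = truncGeomVariance q N := by
      rw [weightedVariance_const_mul _ (by positivity), weightedVariance_add_const _ hW]
      rfl

section Measure

variable {Ω ι : Type*} [MeasurableSpace Ω] [MeasurableSingletonClass Ω]
  {μ : Measure Ω} {A : Set Ω} {s : Finset ι} {w : ι → ℝ} {x : ι → Ω}

lemma integral_cond_of_restrict_eq_sum_dirac (hw : ∀ i ∈ s, 0 ≤ w i)
    (hμA : μ.restrict A = ∑ i ∈ s, ENNReal.ofReal (w i) • Measure.dirac (x i)) (f : Ω → ℝ) :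
    ∫ y, f y ∂μ[|A] = (∑ i ∈ s, w i * f (x i)) / ∑ i ∈ s, w i := by
  have hμA_univ : μ A = ENNReal.ofReal (∑ i ∈ s, w i) := by
    rw [← Measure.restrict_apply_univ, hμA, ENNReal.ofReal_sum_of_nonneg hw]
    simp
  rw [ProbabilityTheory.cond, integral_smul_measure, hμA,
    integral_finsetSum_measure fun i _ => (integrable_dirac (by simp)).smul_measure (by simp),
    hμA_univ, ENNReal.toReal_inv, ENNReal.toReal_ofReal (Finset.sum_nonneg hw), div_eq_inv_mul]
  congr 1
  refine Finset.sum_congr rfl fun i hi => ?_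
  rw [integral_smul_measure, integral_dirac, ENNReal.toReal_ofReal (hw i hi), smul_eq_mul]

lemma variance_cond_of_restrict_eq_sum_dirac {X : Ω → ℝ} (hX : Measurable X)
    (hw : ∀ i ∈ s, 0 ≤ w i)
    (hμA : μ.restrict A = ∑ i ∈ s, ENNReal.ofReal (w i) • Measure.dirac (x i)) :
    variance X μ[|A] = weightedVariance s w (X ∘ x) := by
  rw [variance_eq_integral hX.aemeasurable, integral_cond_of_restrict_eq_sum_dirac hw hμA,
    integral_cond_of_restrict_eq_sum_dirac hw hμA]
  rfl

end Measure

section NatAtoms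

variable {A : Set ℝ}

lemma restrict_sum_dirac_natCast {w : ℕ → ENNReal} (hA : MeasurableSet A) {I : Finset ℕ}
    (hI : Nat.cast ⁻¹' A = (I : Set ℕ)) :
    (Measure.sum fun k : ℕ => w k • Measure.dirac (k : ℝ)).restrict A =
      ∑ k ∈ I, w k • Measure.dirac (k : ℝ) := by
  classical
  ext t ht
  have hmem (k : ℕ) : (k : ℝ) ∈ A ↔ k ∈ I := by
    rw [← Set.mem_preimage, hI, Finset.mem_coe]
  simp only [Measure.restrict_sum _ hA, Measure.sum_apply _ ht, Measure.restrict_smul,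
    restrict_dirac' hA, hmem, Measure.coe_finsetSum, Finset.sum_apply]
  rw [tsum_eq_sum (s := I) fun k hk => by simp [hk]]
  exact Finset.sum_congr rfl fun k hk => by simp [hk]

lemma nonempty_preimage_natCast_of_sum_dirac_pos {w : ℕ → ENNReal} (hA : MeasurableSet A)
    (hpos : 0 < (Measure.sum fun k : ℕ => w k • Measure.dirac (k : ℝ)) A) :
    (Nat.cast ⁻¹' A : Set ℕ).Nonempty := by
  by_contra hempty
  rw [Set.not_nonempty_iff_eq_empty, ← Finset.coe_empty] at hempty
  rw [← Measure.restrict_apply_univ, restrict_sum_dirac_natCast hA hempty] at hpos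
  simp at hpos

lemma exists_preimage_natCast_eq_Icc (hA : A.OrdConnected) (hAbdd : Bornology.IsBounded A)
    (hne : (Nat.cast ⁻¹' A : Set ℕ).Nonempty) :
    ∃ m n : ℕ, m ≤ n ∧ Nat.cast ⁻¹' A = Set.Icc m n := by
  obtain ⟨C, hC⟩ := hAbdd.bddAbove
  have hbdd : BddAbove (Nat.cast ⁻¹' A : Set ℕ) :=
    ⟨⌈C⌉₊, fun k hk => Nat.cast_le.mp ((hC hk).trans (Nat.le_ceil C))⟩
  have hIcc := (hne.ordConnected_iff_of_bdd (OrderBot.bddBelow _) hbdd).mp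
    (hA.preimage_mono Nat.mono_cast)
  exact ⟨_, _, Set.nonempty_Icc.mp (hIcc ▸ hne), hIcc⟩

end NatAtoms

lemma variance_cond_sum_geometric_dirac {q : ℝ} (hq0 : 0 < q) (hq1 : q < 1) {A : Set ℝ}
    (hA : MeasurableSet A) {m n : ℕ} (hmn : m ≤ n) (hAmn : Nat.cast ⁻¹' A = Set.Icc m n) :
    variance id
        (Measure.sum fun k : ℕ => ENNReal.ofReal ((1 - q) * q ^ k) • Measure.dirac (k : ℝ))[|A] =
      truncGeomVariance q (n - m) := by
  rw [← Finset.coe_Icc] at hAmn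
  rw [variance_cond_of_restrict_eq_sum_dirac measurable_id
      (fun k _ => mul_nonneg (sub_nonneg.mpr hq1.le) (pow_nonneg hq0.le k))
      (restrict_sum_dirac_natCast hA hAmn),
    ← weightedVariance_geometric_Icc hq0 hq1 m, Nat.add_sub_cancel' hmn]
  rfl

theorem geometric_conditional_variance_partially_monotone_general
    (q : ℝ) (hq0 : 0 < q) (hq1 : q < 1)
    (μ : Measure ℝ)
    (hμ : μ = Measure.sum
      (fun k : ℕ => ENNReal.ofReal ((1 - q) * q ^ k) • Measure.dirac (k : ℝ)))
    (A B : Set ℝ) (hA : A.OrdConnected) (hB : B.OrdConnected)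
    (hBbdd : Bornology.IsBounded B)
    (hAB : A ⊆ B) (hApos : 0 < μ A) :
    variance id (μ[|A]) ≤ variance id (μ[|B]) := by
  subst hμ
  have hAne := nonempty_preimage_natCast_of_sum_dirac_pos hA.measurableSet hApos
  obtain ⟨m, n, hmn, hAmn⟩ := exists_preimage_natCast_eq_Icc hA (hBbdd.subset hAB) hAne
  obtain ⟨m', n', hmn', hBmn⟩ :=
    exists_preimage_natCast_eq_Icc hB hBbdd (hAne.mono (Set.preimage_mono hAB))
  have hsub : Set.Icc m n ⊆ Set.Icc m' n' := hAmn ▸ hBmn ▸ Set.preimage_mono hAB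
  obtain ⟨hm, hn⟩ := (Set.Icc_subset_Icc_iff hmn).mp hsub
  rw [variance_cond_sum_geometric_dirac hq0 hq1 hA.measurableSet hmn hAmn,
    variance_cond_sum_geometric_dirac hq0 hq1 hB.measurableSet hmn' hBmn]
  exact truncGeomVariance_mono hq0.le hq1 (by omega)

/-- Let `X` be geometric: `P(X = k) = (1 - q) q^k`, `k = 0, 1, 2, …`,
`0 < q < 1`. Then the conditional variance is partially monotonic over finite
(bounded) intervals: `Var(X | X ∈ A) ≤ Var(X | X ∈ B)` for bounded intervals
`A ⊆ B` with `P(X ∈ A) > 0`. -/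
theorem geometric_conditional_variance_partially_monotone
    (q : ℝ) (hq0 : 0 < q) (hq1 : q < 1)
    (μ : Measure ℝ)
    (hμ : μ = Measure.sum
      (fun k : ℕ => ENNReal.ofReal ((1 - q) * q ^ k) • Measure.dirac (k : ℝ)))
    (A B : Set ℝ) (hA : A.OrdConnected) (hB : B.OrdConnected)
    (hAbdd : Bornology.IsBounded A) (hBbdd : Bornology.IsBounded B)
    (hAB : A ⊆ B) (hApos : 0 < μ A) :
    variance id (μ[|A]) ≤ variance id (μ[|B]) :=
  geometric_conditional_variance_partially_monotone_general q hq0 hq1 μ hμ A B hA hB hBbdd hAB hApos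
end

section
/- Let X₁ and X₂ be independent random variables each with a log-concave, differentiable density f, let b > 0 with F(b) = P(0 < X < b) > 0, and let g(u; b) = ∫ᵤᵇ f(x) f(x − u) dx / F(b)² be the conditional density of U = X₁ − X₂ given 0 < X₁, X₂ < b. Then for each b > 0, g(u; b) is decreasing in u for u ∈ [0, b]. -/
/-!
Log-concavity gives `f a * f d ≤ f b * f c` whenever `[b, c]` sits inside `[a, d]` with
`a + d = b + c`. With `s = (v - u) / 2` this compares the integrands pointwise:
`f (x + s) * f (x + s - v) ≤ f x * f (x - u)`. Shifting the integral defining `g v` by `s`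
turns it into an integral over `[(u + v) / 2, b - s] ⊆ [u, b]` of a function dominated by the
nonnegative integrand of `g u`.
-/

open MeasureTheory Set

/-- Log-concavity stated without `log`, so that zeros of `f` need no special treatment. -/
def IsLogConcave (f : ℝ → ℝ) : Prop :=
  ∀ x y p q : ℝ, 0 ≤ p → 0 ≤ q → p + q = 1 → f x ^ p * f y ^ q ≤ f (p * x + q * y)

theorem IsLogConcave.mul_le_mul_of_add_eq {f : ℝ → ℝ} (hlc : IsLogConcave f)
    (hf0 : ∀ x, 0 ≤ f x) {a b c d : ℝ} (hab : a ≤ b) (hbd : b ≤ d) (hac : a ≤ c)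
    (hsum : a + d = b + c) : f a * f d ≤ f b * f c := by
  rcases hac.eq_or_lt with rfl | hac
  · rw [show d = b by linarith, mul_comm]
  set p := (d - b) / (d - a)
  set q := (b - a) / (d - a)
  have hp : 0 ≤ p := div_nonneg (by linarith) (by linarith)
  have hq : 0 ≤ q := div_nonneg (by linarith) (by linarith)
  have hda : d - a ≠ 0 := (show 0 < d - a by linarith).ne'
  have hpq : p + q = 1 := by simp only [p, q]; field_simp; ring
  have hb : f a ^ p * f d ^ q ≤ f b := by
    convert hlc a d p q hp hq hpq using 2
    simp only [p, q]; field_simp; ring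
  have hc : f a ^ q * f d ^ p ≤ f c := by
    convert hlc a d q p hq hp (by linarith) using 2
    simp only [p, q]; field_simp; linear_combination (a - d) * hsum
  have hsplit : f a * f d = (f a ^ p * f d ^ q) * (f a ^ q * f d ^ p) := by
    rw [mul_mul_mul_comm, ← mul_assoc, ← Real.rpow_add' (hf0 a) (by simp [hpq]),
      mul_assoc, ← Real.rpow_add' (hf0 d) (by simp [add_comm q, hpq]), hpq, add_comm q, hpq,
      Real.rpow_one, Real.rpow_one]
  rw [hsplit]
  exact mul_le_mul hb hc (mul_nonneg (Real.rpow_nonneg (hf0 a) q) (Real.rpow_nonneg (hf0 d) p))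
    (hf0 b)

theorem IsLogConcave.antitoneOn_integral_mul_comp_sub {f : ℝ → ℝ} (hlc : IsLogConcave f)
    (hf0 : ∀ x, 0 ≤ f x) (hcont : Continuous f) (b : ℝ) :
    AntitoneOn (fun u => ∫ x in u..b, f x * f (x - u)) (Icc 0 b) := by
  rintro u ⟨hu0, -⟩ v ⟨-, hvb⟩ huv
  set s := (v - u) / 2 with hs
  have hpointwise : ∀ x, f (x + s) * f (x + s - v) ≤ f x * f (x - u) := fun x => by
    rw [mul_comm (f (x + s)), mul_comm (f x)]
    exact hlc.mul_le_mul_of_add_eq hf0 (by linarith) (by linarith) (by linarith) (by ring)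
  have hshift : ∫ x in v..b, f x * f (x - v) =
      ∫ x in (v - s)..(b - s), f (x + s) * f (x + s - v) := by
    simpa using (intervalIntegral.integral_comp_add_right (fun y => f y * f (y - v)) s
      (a := v - s) (b := b - s)).symm
  have hint : ∀ w, Continuous fun x => f x * f (x - w) := fun w => by fun_prop
  calc ∫ x in v..b, f x * f (x - v)
      ≤ ∫ x in (v - s)..(b - s), f x * f (x - u) := by
        rw [hshift]
        exact intervalIntegral.integral_mono_on (by linarith)
          ((hint v).comp (continuous_add_const s) |>.intervalIntegrable _ _)
          ((hint u).intervalIntegrable _ _) fun x _ => hpointwise x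
    _ ≤ ∫ x in u..b, f x * f (x - u) :=
        intervalIntegral.integral_mono_interval (by linarith) (by linarith) (by linarith)
          (Filter.Eventually.of_forall fun x => mul_nonneg (hf0 x) (hf0 _))
          ((hint u).intervalIntegrable _ _)

theorem conditional_difference_density_decreasing_general
    (f : ℝ → ℝ) (hf0 : ∀ x, 0 ≤ f x)
    (hlc : ∀ x y p q : ℝ, 0 ≤ p → 0 ≤ q → p + q = 1 →
      f x ^ p * f y ^ q ≤ f (p * x + q * y))
    (hdiff : Differentiable ℝ f)
    (F : ℝ → ℝ)
    (b : ℝ)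
    (g : ℝ → ℝ → ℝ)
    (hg : ∀ u b, g u b = (∫ x in u..b, f x * f (x - u)) / (F b) ^ 2) :
    AntitoneOn (fun u => g u b) (Icc 0 b) := by
  intro u hu v hv huv
  simp only [hg]
  exact div_le_div_of_nonneg_right
    ((IsLogConcave.antitoneOn_integral_mul_comp_sub hlc hf0 hdiff.continuous b) hu hv huv)
    (sq_nonneg _)

/-- Let `X₁, X₂` be i.i.d. with log-concave differentiable density
`f`, let `F x = P(0 < X < x)`, let `b > 0` with `F b > 0`, and let
`g u b = (∫ x in u..b, f x * f (x - u)) / F(b)²` be the conditional density of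
`U = X₁ - X₂` given `0 < X₁, X₂ < b`. Then `u ↦ g u b` is decreasing on `[0, b]`. -/
theorem conditional_difference_density_decreasing
    (f : ℝ → ℝ) (hf0 : ∀ x, 0 ≤ f x) (hfint : ∫ x, f x = 1)
    (hlc : ∀ x y p q : ℝ, 0 ≤ p → 0 ≤ q → p + q = 1 →
      f x ^ p * f y ^ q ≤ f (p * x + q * y))
    (hdiff : Differentiable ℝ f)
    (F : ℝ → ℝ) (hF : ∀ x, F x = ∫ t in Ioo 0 x, f t)
    (b : ℝ) (hb : 0 < b) (hFb : 0 < F b)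
    (g : ℝ → ℝ → ℝ)
    (hg : ∀ u b, g u b = (∫ x in u..b, f x * f (x - u)) / (F b) ^ 2) :
    AntitoneOn (fun u => g u b) (Icc 0 b) :=
  conditional_difference_density_decreasing_general f hf0 hlc hdiff F b g hg
end

section
/- Let X₁ and X₂ be independent random variables each with a log-concave, differentiable density f, and let U = X₁ − X₂. Then for every function φ(u) that is increasing in |u|, the conditional expectation E(φ(U) | 0 < X₁, X₂ < b) (when defined) is an increasing function of b > 0; more generally, E(φ(U) | X₁, X₂ ∈ A) ≤ E(φ(U) | X₁, X₂ ∈ B) for intervals A ⊂ B. In particular, taking φ(u) = u²/2 gives that Var(X | X ∈ A) is partially monotonic, and taking φ(u) = |u| gives that E(|X₁ − X₂| | X₁, X₂ ∈ A) is partially monotonic. -/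
open MeasureTheory ProbabilityTheory Set Filter Topology
open scoped ENNReal

/-!
For an interval `I` write `N_I(t)` for the `μ ⊗ μ`-mass of `{(x, y) ∈ I² | x - y > t}`, so that
`P(|X₁ - X₂| > t | X₁, X₂ ∈ I) = 2 N_I(t) / μ(I)²`. For the truncations `I_b = J ∩ (-∞, b]` of an
interval `J`, the reflection `(x, y) ↦ (y + t, x - t)`, along which the log-concave weight
`f x * f y` does not decrease, maps `{x - y > t}` into `{x - y ≤ t}` and gives
`2 N_{I_b}(t) ≤ μ(I_{b-t}) μ(I_b)`. Since `d/db N_{I_b}(t) = f b μ(I_{b-t})` and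
`d/db μ(I_b) = f b`, this is exactly the statement that `N_{I_b}(t) / μ(I_b)²` increases with `b`.
Hence enlarging an interval to the right, and by `x ↦ -x` to the left, stochastically increases
`|X₁ - X₂|`, and the layer-cake formula turns this into the comparison of the conditional means of
every function of `X₁ - X₂` that is increasing in `|u|`; the variance is the case `u ↦ u² / 2`.
-/

def LogConcave (f : ℝ → ℝ) : Prop :=
  ∀ x y p q : ℝ, 0 ≤ p → 0 ≤ q → p + q = 1 → f x ^ p * f y ^ q ≤ f (p * x + q * y)

namespace LogConcave

variable {f : ℝ → ℝ}

theorem comp_neg (hf : LogConcave f) : LogConcave fun x => f (-x) := by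
  intro x y p q hp hq hpq
  have h := hf (-x) (-y) p q hp hq hpq
  rwa [show p * -x + q * -y = -(p * x + q * y) by ring] at h

theorem mul_le_mul_shift (hf : LogConcave f) (hf0 : ∀ x, 0 ≤ f x) {x y t : ℝ} (ht : 0 ≤ t)
    (hxy : y + t ≤ x) : f x * f y ≤ f (y + t) * f (x - t) := by
  rcases ht.eq_or_lt with rfl | ht
  · simp [mul_comm]
  have hd : 0 < x - y := by linarith
  set p := t / (x - y)
  have hp : p * (x - y) = t := div_mul_cancel₀ t hd.ne'
  have hp0 : 0 ≤ p := by positivity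
  have hp1 : 0 ≤ 1 - p := by rw [sub_nonneg, div_le_one hd]; linarith
  have h₁ := hf x y p (1 - p) hp0 hp1 (by ring)
  have h₂ := hf x y (1 - p) p hp1 hp0 (by ring)
  rw [show p * x + (1 - p) * y = y + t by linear_combination hp] at h₁
  rw [show (1 - p) * x + p * y = x - t by linear_combination -hp] at h₂
  calc f x * f y = (f x ^ p * f y ^ (1 - p)) * (f x ^ (1 - p) * f y ^ p) := by
        rw [mul_mul_mul_comm, ← Real.rpow_add' (hf0 x) (by norm_num),
          mul_comm (f y ^ _), ← Real.rpow_add' (hf0 y) (by norm_num)]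
        simp
    _ ≤ f (y + t) * f (x - t) := by
        gcongr
        · exact mul_nonneg (Real.rpow_nonneg (hf0 x) _) (Real.rpow_nonneg (hf0 y) _)
        · exact hf0 _

end LogConcave

theorem continuous_integral_Iic {φ : ℝ → ℝ} (hφ : Integrable φ) :
    Continuous fun x => ∫ s in Iic x, φ s := by
  have h : (fun x => ∫ s in Iic x, φ s) = fun x => (∫ s in Iic 0, φ s) + ∫ s in 0..x, φ s := by
    ext x
    rw [← intervalIntegral.integral_Iic_sub_Iic hφ.integrableOn hφ.integrableOn]
    ring
  rw [h]
  exact continuous_const.add (intervalIntegral.continuous_primitive (fun _ _ =>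
    hφ.intervalIntegrable) 0)

theorem hasDerivAt_integral_Iic {φ : ℝ → ℝ} (hφ : Integrable φ) {u : ℝ}
    (hu : ContinuousAt φ u) : HasDerivAt (fun x => ∫ s in Iic x, φ s) (φ u) u := by
  have h : (fun x => ∫ s in Iic x, φ s) = fun x => (∫ s in Iic u, φ s) + ∫ s in u..x, φ s := by
    ext x
    rw [← intervalIntegral.integral_Iic_sub_Iic hφ.integrableOn hφ.integrableOn]
    ring
  rw [h]
  exact (intervalIntegral.integral_hasDerivAt_right hφ.intervalIntegrable
    hφ.aestronglyMeasurable.stronglyMeasurableAtFilter hu).const_add _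

theorem withDensity_le_of_measurePreserving {α : Type*} [MeasurableSpace α] {ν : Measure α}
    {w : α → ℝ≥0∞} (hw : Measurable w) {Φ : α → α} (hΦ : MeasurePreserving Φ ν ν)
    {S T : Set α} (hS : MeasurableSet S) (hT : MeasurableSet T) (hST : S ⊆ Φ ⁻¹' T)
    (hwΦ : ∀ p ∈ S, w p ≤ w (Φ p)) : ν.withDensity w S ≤ ν.withDensity w T := by
  rw [withDensity_apply _ hS, withDensity_apply _ hT, ← hΦ.setLIntegral_comp_preimage hT hw]
  calc ∫⁻ p in S, w p ∂ν ≤ ∫⁻ p in S, w (Φ p) ∂ν := setLIntegral_mono (hw.comp hΦ.measurable) hwΦ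
    _ ≤ ∫⁻ p in Φ ⁻¹' T, w (Φ p) ∂ν := lintegral_mono_set hST

/-- If `N' = g h` and `G' = g ≥ 0` with `2 N ≤ h G`, then `(N / G²)' = g G (h G - 2 N) / G⁴ ≥ 0`. -/
theorem monotoneOn_div_sq_of_hasDerivAt {G N g h : ℝ → ℝ} {a b : ℝ}
    (hGc : ContinuousOn G (Icc a b)) (hNc : ContinuousOn N (Icc a b))
    (hG : ∀ u ∈ Ioo a b, HasDerivAt G (g u) u) (hN : ∀ u ∈ Ioo a b, HasDerivAt N (g u * h u) u)
    (hg : ∀ u ∈ Ioo a b, 0 ≤ g u) (hpos : ∀ u ∈ Icc a b, 0 < G u)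
    (hkey : ∀ u ∈ Ioo a b, 2 * N u ≤ h u * G u) :
    MonotoneOn (fun x => N x / G x ^ 2) (Icc a b) := by
  rw [← interior_Icc] at hG hN hg hkey
  refine monotoneOn_of_hasDerivWithinAt_nonneg (convex_Icc a b)
    (hNc.div (hGc.pow 2) fun u hu => (pow_pos (hpos u hu) 2).ne')
    (fun u hu => ((hN u hu).div ((hG u hu).pow 2)
      (pow_pos (hpos u (interior_subset hu)) 2).ne').hasDerivWithinAt) fun u hu => ?_
  have hGu := hpos u (interior_subset hu)
  have hnum : 0 ≤ g u * G u * (h u * G u - 2 * N u) :=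
    mul_nonneg (mul_nonneg (hg u hu) hGu.le) (by linarith [hkey u hu])
  refine div_nonneg (hnum.trans_eq ?_) (by positivity)
  change _ = g u * h u * G u ^ 2 - N u * ((2 : ℕ) * G u ^ (2 - 1) * g u)
  push_cast
  ring

section StochasticDominance

variable {Ω : Type*} [MeasurableSpace Ω] {P Q : Measure Ω} [IsProbabilityMeasure P]
  [IsProbabilityMeasure Q] {X : Ω → ℝ}

theorem measure_ge_le_of_tail_le (hX : Measurable X)
    (htail : ∀ τ, P {ω | τ < X ω} ≤ Q {ω | τ < X ω}) (τ : ℝ) :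
    P {ω | τ ≤ X ω} ≤ Q {ω | τ ≤ X ω} := by
  have hinter : {ω | τ ≤ X ω} = ⋂ n : ℕ, {ω | τ - 1 / (n + 1) < X ω} := by
    ext ω
    simp only [mem_iInter, mem_ofPred_eq]
    refine ⟨fun h n => by linarith [Nat.one_div_pos_of_nat (α := ℝ) (n := n)], fun h => ?_⟩
    by_contra! hlt
    obtain ⟨n, hn⟩ := exists_nat_one_div_lt (sub_pos.mpr hlt)
    linarith [h n]
  have hanti : Antitone fun n : ℕ => {ω | τ - 1 / (n + 1) < X ω} := fun m n hmn ω hω => by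
    have hω : τ - 1 / (n + 1) < X ω := hω
    have : 1 / ((n : ℝ) + 1) ≤ 1 / (m + 1) := Nat.one_div_le_one_div hmn
    show τ - 1 / (m + 1) < X ω
    linarith
  have hmeas : ∀ n : ℕ, MeasurableSet {ω | τ - 1 / (n + 1) < X ω} := fun _ =>
    measurableSet_lt measurable_const hX
  rw [hinter, hanti.measure_iInter (fun n => (hmeas n).nullMeasurableSet) ⟨0, measure_ne_top _ _⟩,
    hanti.measure_iInter (fun n => (hmeas n).nullMeasurableSet) ⟨0, measure_ne_top _ _⟩]
  exact iInf_mono fun n => htail _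

theorem measure_preimage_le_of_tail_le (hX : Measurable X)
    (htail : ∀ τ, P {ω | τ < X ω} ≤ Q {ω | τ < X ω}) {S : Set ℝ} (hS : IsUpperSet S) :
    P (X ⁻¹' S) ≤ Q (X ⁻¹' S) := by
  rcases S.eq_empty_or_nonempty with rfl | hne
  · simp
  by_cases hbdd : BddBelow S
  swap
  · have : S = univ := eq_univ_of_forall fun u => by
      obtain ⟨s, hs, hsu⟩ := not_bddBelow_iff.mp hbdd u
      exact hS hsu.le hs
    simp [this]
  set τ := sInf S
  by_cases hτ : τ ∈ S
  · rw [subset_antisymm (fun s hs => csInf_le hbdd hs) (hS.Ici_subset hτ)]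
    exact measure_ge_le_of_tail_le hX htail τ
  · have hSτ : S = Ioi τ := by
      ext u
      refine ⟨fun hu => lt_of_le_of_ne (csInf_le hbdd hu) fun h : τ = u => hτ (h ▸ hu),
        fun hu => ?_⟩
      obtain ⟨s, hs, hsu⟩ := exists_lt_of_csInf_lt hne hu
      exact hS hsu.le hs
    rw [hSτ]
    exact htail τ

/-- Layer-cake formula for `ψ ∘ X - ψ 0`, whose superlevel sets are preimages of upper sets. -/
theorem integral_comp_le_of_tail_le (hX : Measurable X) (hX0 : ∀ ω, 0 ≤ X ω)
    (htail : ∀ τ, P {ω | τ < X ω} ≤ Q {ω | τ < X ω}) {ψ : ℝ → ℝ} (hψ : MonotoneOn ψ (Ici 0))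
    (hP : Integrable (fun ω => ψ (X ω)) P) (hQ : Integrable (fun ω => ψ (X ω)) Q) :
    ∫ ω, ψ (X ω) ∂P ≤ ∫ ω, ψ (X ω) ∂Q := by
  set W : Ω → ℝ := fun ω => ψ (X ω) - ψ 0
  have hW0 : ∀ ω, 0 ≤ W ω := fun ω => sub_nonneg.mpr (hψ self_mem_Ici (hX0 ω) (hX0 ω))
  have hWP : Integrable W P := hP.sub (integrable_const _)
  have hWQ : Integrable W Q := hQ.sub (integrable_const _)
  suffices ∫ ω, W ω ∂P ≤ ∫ ω, W ω ∂Q by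
    simpa [W, integral_sub hP (integrable_const _), integral_sub hQ (integrable_const _)] using this
  have hlevel : ∀ s, P {ω | s < W ω} ≤ Q {ω | s < W ω} := fun s => by
    have hset : {ω | s < W ω} = X ⁻¹' {u | 0 ≤ u ∧ s + ψ 0 < ψ u} := by
      ext ω
      simp [W, hX0 ω, lt_sub_iff_add_lt]
    rw [hset]
    exact measure_preimage_le_of_tail_le hX htail fun u v huv ⟨hu, hlt⟩ =>
      ⟨hu.trans huv, hlt.trans_le (hψ hu (hu.trans huv) huv)⟩
  rw [integral_eq_lintegral_of_nonneg_ae (ae_of_all _ hW0) hWP.aestronglyMeasurable,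
    integral_eq_lintegral_of_nonneg_ae (ae_of_all _ hW0) hWQ.aestronglyMeasurable]
  refine ENNReal.toReal_mono hWQ.lintegral_lt_top.ne ?_
  rw [lintegral_eq_lintegral_meas_lt _ (ae_of_all _ hW0) hWP.aemeasurable,
    lintegral_eq_lintegral_meas_lt _ (ae_of_all _ hW0) hWQ.aemeasurable]
  exact lintegral_mono fun s => hlevel s

end StochasticDominance

theorem cond_prod_eq_prod_cond {α β : Type*} [MeasurableSpace α] [MeasurableSpace β]
    {μ : Measure α} {ν : Measure β} [IsFiniteMeasure μ] [IsFiniteMeasure ν] (s : Set α)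
    (t : Set β) : (μ.prod ν)[|s ×ˢ t] = μ[|s].prod ν[|t] := by
  rw [ProbabilityTheory.cond, ProbabilityTheory.cond, ProbabilityTheory.cond,
    Measure.prod_smul_left, Measure.prod_smul_right, Measure.prod_restrict,
    Measure.prod_prod, smul_smul, ENNReal.mul_inv (Or.inr (measure_ne_top _ _))
      (Or.inl (measure_ne_top _ _)), mul_comm]

theorem norm_measureReal_le_measureReal_univ {α : Type*} [MeasurableSpace α] (μ : Measure α)
    [IsFiniteMeasure μ] (s : Set α) : ‖μ.real s‖ ≤ μ.real univ := by
  rw [Real.norm_of_nonneg measureReal_nonneg]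
  exact measureReal_mono (subset_univ s)

theorem isProbabilityMeasure_cond_prod_self {α : Type*} [MeasurableSpace α] {μ : Measure α}
    [IsFiniteMeasure μ] {s : Set α} (hs : μ s ≠ 0) : IsProbabilityMeasure ((μ.prod μ)[|s ×ˢ s]) :=
  cond_isProbabilityMeasure (by rw [Measure.prod_prod]; exact mul_ne_zero hs hs)

theorem two_mul_variance_eq_integral_sub_sq {ν : Measure ℝ} [IsProbabilityMeasure ν]
    (h : MemLp id 2 ν) : 2 * variance id ν = ∫ p, (p.1 - p.2) ^ 2 ∂(ν.prod ν) := by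
  have hsum := variance_add_prod h h.neg
  rw [variance_neg] at hsum
  have hmean : ∫ p, (p.1 - p.2) ∂(ν.prod ν) = 0 := by
    have hfst : Integrable (fun p : ℝ × ℝ => p.1) (ν.prod ν) := (h.integrable one_le_two).comp_fst ν
    have hsnd : Integrable (fun p : ℝ × ℝ => p.2) (ν.prod ν) := (h.integrable one_le_two).comp_snd ν
    rw [integral_sub hfst hsnd, integral_fun_fst (f := fun x => x),
      integral_fun_snd (f := fun x => x), sub_self]
  rw [two_mul, ← hsum, variance_eq_integral (by fun_prop)]
  simp [← sub_eq_add_neg, hmean]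

/-- The mass `N_I(t)`: if `X₁, X₂` are i.i.d. with law `μ`, then
`P(X₁ - X₂ > t | X₁, X₂ ∈ I) = gapMass μ t I / μ I ^ 2`. -/
noncomputable def gapMass (μ : Measure ℝ) (t : ℝ) (I : Set ℝ) : ℝ≥0∞ :=
  (μ.prod μ) ((I ×ˢ I) ∩ {p | p.2 + t < p.1})

section gapMass

variable {μ : Measure ℝ} {t : ℝ} {I J : Set ℝ}

theorem measurableSet_gap (hI : MeasurableSet I) (t : ℝ) :
    MeasurableSet ((I ×ˢ I) ∩ {p : ℝ × ℝ | p.2 + t < p.1}) :=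
  (hI.prod hI).inter (measurableSet_lt (by fun_prop) (by fun_prop))

theorem gapMass_mono (h : I ⊆ J) : gapMass μ t I ≤ gapMass μ t J :=
  measure_mono (inter_subset_inter_left _ (prod_mono h h))

theorem gapMass_congr_ae [SFinite μ] (h : I =ᵐ[μ] J) : gapMass μ t I = gapMass μ t J :=
  measure_congr ((Measure.set_prod_ae_eq h h).inter (ae_eq_refl _))

theorem gapMass_eq_lintegral [SFinite μ] (hI : MeasurableSet I) :
    gapMass μ t I = ∫⁻ x in I, μ (I ∩ Iio (x - t)) ∂μ := by
  rw [gapMass, Measure.prod_apply (measurableSet_gap hI t), ← lintegral_indicator hI]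
  congr 1 with x
  by_cases hx : x ∈ I
  · rw [indicator_of_mem hx]
    congr 1 with y
    simp [hx, lt_sub_iff_add_lt]
  · simp [hx]

theorem measure_prod_swap_gap [SFinite μ] (hI : MeasurableSet I) :
    (μ.prod μ) ((I ×ˢ I) ∩ {p | p.1 + t < p.2}) = gapMass μ t I := by
  rw [gapMass, ← Measure.measurePreserving_swap.measure_preimage
    (measurableSet_gap hI t).nullMeasurableSet]
  congr 1 with p
  simp [and_comm]

theorem measure_prod_abs_sub_gt [SFinite μ] (hI : MeasurableSet I) (ht : 0 ≤ t) :
    (μ.prod μ) ((I ×ˢ I) ∩ {p | t < |p.1 - p.2|}) = 2 * gapMass μ t I := by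
  have hsplit : (I ×ˢ I) ∩ {p : ℝ × ℝ | t < |p.1 - p.2|} =
      ((I ×ˢ I) ∩ {p | p.2 + t < p.1}) ∪ ((I ×ˢ I) ∩ {p | p.1 + t < p.2}) := by
    ext p
    simp only [mem_inter_iff, mem_union, mem_ofPred_eq, lt_abs, ← and_or_left]
    constructor <;> rintro ⟨h, h' | h'⟩ <;> first
      | exact ⟨h, Or.inl (by linarith)⟩ | exact ⟨h, Or.inr (by linarith)⟩
  have hdisj : Disjoint ((I ×ˢ I) ∩ {p : ℝ × ℝ | p.2 + t < p.1})
      ((I ×ˢ I) ∩ {p | p.1 + t < p.2}) :=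
    disjoint_left.mpr fun p h h' => by linarith [h.2.out, h'.2.out]
  rw [hsplit, measure_union hdisj ((hI.prod hI).inter (measurableSet_lt (by fun_prop)
    (by fun_prop))), measure_prod_swap_gap hI, gapMass, two_mul]

theorem gapMass_map_neg [SFinite μ] (hI : MeasurableSet I) :
    gapMass (μ.map Neg.neg) t (Neg.neg ⁻¹' I) = gapMass μ t I := by
  rw [gapMass, Measure.map_prod_map _ _ measurable_neg measurable_neg,
    Measure.map_apply (measurable_neg.prodMap measurable_neg)
      (measurableSet_gap (hI.preimage measurable_neg) t), ← measure_prod_swap_gap hI]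
  congr 1 with p
  simp [add_comm]

theorem gapMass_inter_Iic [IsFiniteMeasure μ] [NullSingletonClass μ] (hJ : MeasurableSet J)
    (ht : 0 ≤ t) (b : ℝ) :
    gapMass μ t (J ∩ Iic b) = ENNReal.ofReal (∫ x in J ∩ Iic b, μ.real (J ∩ Iic (x - t)) ∂μ) := by
  have hmono : Monotone fun x => μ.real (J ∩ Iic (x - t)) := fun x y hxy =>
    measureReal_mono (inter_subset_inter_right _ (Iic_subset_Iic.mpr (by linarith)))
  rw [gapMass_eq_lintegral (hJ.inter measurableSet_Iic), ofReal_integral_eq_lintegral_ofReal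
    (Integrable.of_bound hmono.measurable.aestronglyMeasurable (μ.real univ)
      (ae_of_all _ fun _ => norm_measureReal_le_measureReal_univ μ _))
    (ae_of_all _ fun _ => measureReal_nonneg)]
  refine setLIntegral_congr_fun (hJ.inter measurableSet_Iic) fun x hx => ?_
  have hslice : J ∩ Iic b ∩ Iio (x - t) = J ∩ Iio (x - t) := by
    rw [inter_assoc, inter_eq_right.mpr (Iio_subset_Iic_iff.mpr (by linarith [mem_Iic.mp hx.2]))]
  rw [hslice, ofReal_measureReal, measure_congr ((ae_eq_refl J).inter Iio_ae_eq_Iic)]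

end gapMass

structure HasContinuousDensity (μ : Measure ℝ) (f : ℝ → ℝ) : Prop where
  nonneg : ∀ x, 0 ≤ f x
  continuous : Continuous f
  eq_withDensity : μ = volume.withDensity fun x => ENNReal.ofReal (f x)

structure HasContinuousLogConcaveDensity (μ : Measure ℝ) (f : ℝ → ℝ) : Prop
    extends HasContinuousDensity μ f where
  logConcave : LogConcave f

namespace HasContinuousDensity

variable {μ : Measure ℝ} {f : ℝ → ℝ} {J : Set ℝ}

theorem measurable_density (hμ : HasContinuousDensity μ f) :
    Measurable fun x => ENNReal.ofReal (f x) :=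
  hμ.continuous.measurable.ennreal_ofReal

theorem nullSingletonClass (hμ : HasContinuousDensity μ f) : NullSingletonClass μ := by
  rw [hμ.eq_withDensity]
  infer_instance

theorem map_neg (hμ : HasContinuousDensity μ f) :
    HasContinuousDensity (μ.map Neg.neg) fun x => f (-x) where
  nonneg x := hμ.nonneg (-x)
  continuous := hμ.continuous.comp continuous_neg
  eq_withDensity := by
    ext s hs
    rw [Measure.map_apply measurable_neg hs, hμ.eq_withDensity,
      withDensity_apply _ (hs.preimage measurable_neg), withDensity_apply _ hs]
    simpa using (Measure.measurePreserving_neg volume).setLIntegral_comp_preimage hs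
      (hμ.measurable_density.comp measurable_neg)

theorem integrable [IsFiniteMeasure μ] (hμ : HasContinuousDensity μ f) : Integrable f := by
  refine ⟨hμ.continuous.aestronglyMeasurable, ?_⟩
  rw [hasFiniteIntegral_iff_ofReal (ae_of_all _ hμ.nonneg)]
  simpa [hμ.eq_withDensity] using measure_lt_top μ univ

theorem setIntegral_inter_Iic (hμ : HasContinuousDensity μ f) (hJ : MeasurableSet J)
    (h : ℝ → ℝ) (x : ℝ) :
    ∫ s in J ∩ Iic x, h s ∂μ = ∫ s in Iic x, J.indicator (fun s => f s * h s) s := by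
  rw [hμ.eq_withDensity, setIntegral_withDensity_eq_setIntegral_toReal_smul
    hμ.measurable_density (ae_of_all _ fun _ => ENNReal.ofReal_lt_top) _
    (hJ.inter measurableSet_Iic), setIntegral_indicator hJ, inter_comm]
  simp [ENNReal.toReal_ofReal (hμ.nonneg _)]

theorem continuous_setIntegral_inter_Iic [IsFiniteMeasure μ] (hμ : HasContinuousDensity μ f)
    (hJ : MeasurableSet J) {h : ℝ → ℝ} (hh : Continuous h) {C : ℝ} (hC : ∀ x, ‖h x‖ ≤ C) :
    Continuous fun x => ∫ s in J ∩ Iic x, h s ∂μ := by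
  simp_rw [hμ.setIntegral_inter_Iic hJ]
  exact continuous_integral_Iic
    ((hμ.integrable.mul_bdd hh.aestronglyMeasurable (ae_of_all _ hC)).indicator hJ)

theorem hasDerivAt_setIntegral_inter_Iic [IsFiniteMeasure μ] (hμ : HasContinuousDensity μ f)
    (hJ : MeasurableSet J) {h : ℝ → ℝ} (hh : Continuous h) {C : ℝ} (hC : ∀ x, ‖h x‖ ≤ C)
    {u : ℝ} (hu : J ∈ 𝓝 u) :
    HasDerivAt (fun x => ∫ s in J ∩ Iic x, h s ∂μ) (f u * h u) u := by
  simp_rw [hμ.setIntegral_inter_Iic hJ]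
  convert hasDerivAt_integral_Iic
    ((hμ.integrable.mul_bdd hh.aestronglyMeasurable (ae_of_all _ hC)).indicator hJ)
    ((hμ.continuous.mul hh).continuousAt.congr
      (eventuallyEq_of_mem hu fun _ hs => (indicator_of_mem hs _).symm)) using 1
  rw [indicator_of_mem (mem_of_mem_nhds hu)]

end HasContinuousDensity

namespace HasContinuousLogConcaveDensity

variable {μ : Measure ℝ} {f : ℝ → ℝ} {t : ℝ} {I J : Set ℝ}

theorem map_neg (hμ : HasContinuousLogConcaveDensity μ f) :
    HasContinuousLogConcaveDensity (μ.map Neg.neg) fun x => f (-x) :=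
  { hμ.toHasContinuousDensity.map_neg with logConcave := hμ.logConcave.comp_neg }

theorem two_mul_gapMass_le (hμ : HasContinuousLogConcaveDensity μ f) (hI : I.OrdConnected)
    {b : ℝ} (hIb : I ⊆ Iic b) (ht : 0 ≤ t) :
    2 * gapMass μ t I ≤ μ I * μ (I ∩ Iic (b - t)) := by
  obtain ⟨⟨hf0, hfc, rfl⟩, hlc⟩ := hμ
  have hIm := hI.measurableSet
  set H : Set (ℝ × ℝ) := {p | p.2 + t < p.1}
  have hH : MeasurableSet H := measurableSet_lt (by fun_prop) (by fun_prop)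
  set S : Set (ℝ × ℝ) := I ×ˢ (I ∩ Iic (b - t))
  have hSH : S ∩ H = (I ×ˢ I) ∩ H := by
    ext ⟨x, y⟩
    simp only [S, H, mem_inter_iff, mem_prod, mem_Iic, mem_ofPred_eq]
    constructor
    · rintro ⟨⟨hx, hy, -⟩, hxy⟩
      exact ⟨⟨hx, hy⟩, hxy⟩
    · rintro ⟨⟨hx, hy⟩, hxy⟩
      exact ⟨⟨hx, hy, by linarith [show x ≤ b from hIb hx]⟩, hxy⟩
  have hΦ : MeasurePreserving (fun p : ℝ × ℝ => (p.2 + t, p.1 - t)) (volume.prod volume)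
      (volume.prod volume) :=
    ((measurePreserving_add_right volume t).prod (measurePreserving_sub_right volume t)).comp
      Measure.measurePreserving_swap
  have hreflect : gapMass (volume.withDensity fun x => ENNReal.ofReal (f x)) t I ≤
      ((volume.withDensity fun x => ENNReal.ofReal (f x)).prod
        (volume.withDensity fun x => ENNReal.ofReal (f x))) (S \ H) := by
    have hm : Measurable fun x => ENNReal.ofReal (f x) := hfc.measurable.ennreal_ofReal
    rw [gapMass, prod_withDensity hm hm]
    refine withDensity_le_of_measurePreserving (by fun_prop) hΦ (measurableSet_gap hIm t)
      ((hIm.prod (hIm.inter measurableSet_Iic)).diff hH) ?_ ?_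
    · rintro ⟨x, y⟩ ⟨⟨hx, hy⟩, hxy⟩
      simp only [mem_ofPred_eq] at hxy hx hy
      refine ⟨⟨hI.out hy hx ⟨by linarith, by linarith⟩,
        hI.out hy hx ⟨by linarith, by linarith⟩, sub_le_sub_right (hIb hx) t⟩, ?_⟩
      simp only [H, mem_ofPred_eq, not_lt]
      linarith
    · rintro ⟨x, y⟩ ⟨-, hxy⟩
      simp only [← ENNReal.ofReal_mul (hf0 _)]
      exact ENNReal.ofReal_le_ofReal (hlc.mul_le_mul_shift hf0 ht (le_of_lt hxy))
  calc 2 * gapMass _ t I = gapMass _ t I + gapMass _ t I := two_mul _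
    _ ≤ gapMass _ t I + (_ : Measure (ℝ × ℝ)) (S \ H) := by gcongr
    _ = (_ : Measure (ℝ × ℝ)) S := by rw [gapMass, ← hSH, measure_inter_add_sdiff _ hH]
    _ = _ := Measure.prod_prod _ _

theorem gapMass_mul_sq_le_of_Ioo_subset [IsFiniteMeasure μ]
    (hμ : HasContinuousLogConcaveDensity μ f) (hJ : J.OrdConnected) (ht : 0 ≤ t) {c b : ℝ}
    (hcb : c ≤ b) (hsub : Ioo c b ⊆ J) (hc : 0 < μ (J ∩ Iic c)) :
    gapMass μ t (J ∩ Iic c) * μ (J ∩ Iic b) ^ 2 ≤ gapMass μ t (J ∩ Iic b) * μ (J ∩ Iic c) ^ 2 := by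
  have := hμ.nullSingletonClass
  have hJm := hJ.measurableSet
  set G : ℝ → ℝ := fun x => μ.real (J ∩ Iic x)
  set N : ℝ → ℝ := fun x => ∫ s in J ∩ Iic x, G (s - t) ∂μ
  have hG : G = fun x => ∫ _ in J ∩ Iic x, (1 : ℝ) ∂μ := by simp [G]
  have hGc : Continuous G :=
    hG ▸ hμ.continuous_setIntegral_inter_Iic hJm continuous_const fun _ => norm_one.le
  have hGt : ∀ x, ‖μ.real (J ∩ Iic (x - t))‖ ≤ μ.real univ := fun _ =>
    norm_measureReal_le_measureReal_univ μ _
  have hNc : Continuous N :=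
    hμ.continuous_setIntegral_inter_Iic hJm (hGc.comp (continuous_sub_right t)) hGt
  have hgap : ∀ x, gapMass μ t (J ∩ Iic x) = ENNReal.ofReal (N x) := gapMass_inter_Iic hJm ht
  have hN0 : ∀ x, 0 ≤ N x := fun x => setIntegral_nonneg (hJm.inter measurableSet_Iic)
    fun _ _ => measureReal_nonneg
  have hkey : ∀ u, 2 * N u ≤ G (u - t) * G u := fun u => by
    have h := ENNReal.toReal_mono (by finiteness)
      (hμ.two_mul_gapMass_le (hJ.inter ordConnected_Iic) inter_subset_right ht (b := u))
    rwa [inter_assoc, Iic_inter_Iic, min_eq_right (by linarith), hgap, ENNReal.toReal_mul,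
      ENNReal.toReal_mul, ENNReal.toReal_ofReal (hN0 u), ← measureReal_def, ← measureReal_def,
      mul_comm (G u)] at h
  have hGpos : ∀ u ∈ Icc c b, 0 < G u := fun u hu =>
    (ENNReal.toReal_pos hc.ne' (measure_ne_top _ _)).trans_le
      (measureReal_mono (inter_subset_inter_right _ (Iic_subset_Iic.mpr hu.1)))
  have hnhds : ∀ u ∈ Ioo c b, J ∈ 𝓝 u := fun u hu =>
    mem_of_superset (isOpen_Ioo.mem_nhds hu) hsub
  have hmono := monotoneOn_div_sq_of_hasDerivAt hGc.continuousOn hNc.continuousOn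
    (fun u hu => by simpa [← hG] using
      hμ.hasDerivAt_setIntegral_inter_Iic hJm continuous_const (fun _ => norm_one.le) (hnhds u hu))
    (fun u hu => hμ.hasDerivAt_setIntegral_inter_Iic hJm (hGc.comp (continuous_sub_right t)) hGt
      (hnhds u hu))
    (fun u _ => hμ.nonneg u) hGpos (fun u _ => hkey u)
  have hreal := hmono ⟨le_rfl, hcb⟩ ⟨hcb, le_rfl⟩ hcb
  rw [div_le_div_iff₀ (pow_pos (hGpos c ⟨le_rfl, hcb⟩) 2) (pow_pos (hGpos b ⟨hcb, le_rfl⟩) 2)]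
    at hreal
  rw [hgap, hgap, ← ofReal_measureReal, ← ofReal_measureReal, ← ENNReal.ofReal_pow
    measureReal_nonneg, ← ENNReal.ofReal_pow measureReal_nonneg, ← ENNReal.ofReal_mul (hN0 c),
    ← ENNReal.ofReal_mul (hN0 b)]
  exact ENNReal.ofReal_le_ofReal hreal

theorem gapMass_mul_sq_le_of_le [IsFiniteMeasure μ] (hμ : HasContinuousLogConcaveDensity μ f)
    (hJ : J.OrdConnected) (ht : 0 ≤ t) {c b : ℝ} (hcb : c ≤ b) (hc : 0 < μ (J ∩ Iic c)) :
    gapMass μ t (J ∩ Iic c) * μ (J ∩ Iic b) ^ 2 ≤ gapMass μ t (J ∩ Iic b) * μ (J ∩ Iic c) ^ 2 := by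
  by_cases hsub : Ioo c b ⊆ J
  · exact hμ.gapMass_mul_sq_le_of_Ioo_subset hJ ht hcb hsub hc
  obtain ⟨u, hu, huJ⟩ := not_subset.mp hsub
  obtain ⟨z, hzJ, hzc⟩ := nonempty_of_measure_ne_zero hc.ne'
  have hJu : J ⊆ Iio u := fun y hy => lt_of_not_ge fun huy =>
    huJ (hJ.out hzJ hy ⟨by linarith [mem_Iic.mp hzc, hu.1], huy⟩)
  have hbdd : BddAbove J := ⟨u, fun y hy => (hJu hy).le⟩
  set d := max c (sSup J)
  have hbd : J ∩ Iic b = J ∩ Iic d := by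
    rw [inter_eq_left.mpr (show J ⊆ Iic b from fun y hy => (hJu hy).le.trans hu.2.le),
      inter_eq_left.mpr (show J ⊆ Iic d from fun y hy =>
        (le_csSup hbdd hy).trans (le_max_right _ _))]
  have hsub' : Ioo c d ⊆ J := fun v hv => by
    obtain ⟨y, hy, hvy⟩ := exists_lt_of_lt_csSup ⟨z, hzJ⟩
      ((lt_max_iff.mp hv.2).resolve_left hv.1.not_gt)
    exact hJ.out hzJ hy ⟨by linarith [mem_Iic.mp hzc, hv.1], hvy.le⟩
  rw [hbd]
  exact hμ.gapMass_mul_sq_le_of_Ioo_subset hJ ht (le_max_left _ _) hsub' hc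

theorem gapMass_mul_sq_le_of_upper [IsFiniteMeasure μ] (hμ : HasContinuousLogConcaveDensity μ f)
    {K K' : Set ℝ} (hK' : K'.OrdConnected) (hKK' : K ⊆ K') (hup : ∀ z ∈ K' \ K, ∀ w ∈ K, w ≤ z)
    (hK : 0 < μ K) (ht : 0 ≤ t) : gapMass μ t K * μ K' ^ 2 ≤ gapMass μ t K' * μ K ^ 2 := by
  by_cases hbdd : BddAbove K
  swap
  · have : K' = K := subset_antisymm (fun z hz => by_contra fun hzK =>
      hbdd ⟨z, fun w hw => hup z ⟨hz, hzK⟩ w hw⟩) hKK'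
    rw [this]
  have := hμ.nullSingletonClass
  set c := sSup K
  have hKc : K =ᵐ[μ] (K' ∩ Iic c : Set ℝ) := by
    have hKc : K ⊆ Iic c := fun w hw => le_csSup hbdd hw
    refine ae_eq_set.mpr ⟨by rw [sdiff_eq_empty.mpr (subset_inter hKK' hKc), measure_empty],
      measure_mono_null (fun z ⟨⟨hz, hzc⟩, hzK⟩ => ?_) (measure_singleton c)⟩
    exact le_antisymm hzc (csSup_le (nonempty_of_measure_ne_zero hK.ne') (hup z ⟨hz, hzK⟩))
  rw [gapMass_congr_ae hKc, measure_congr hKc]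
  rw [measure_congr hKc] at hK
  have hmono : Monotone fun b : ℝ => K' ∩ Iic b := fun a b hab =>
    inter_subset_inter_right _ (Iic_subset_Iic.mpr hab)
  have hsup : μ K' = ⨆ b : ℝ, μ (K' ∩ Iic b) := by
    rw [← hmono.measure_iUnion, ← inter_iUnion, iUnion_Iic, inter_univ]
  rw [hsup, ENNReal.iSup_pow, ENNReal.mul_iSup]
  refine iSup_le fun b => ?_
  calc gapMass μ t (K' ∩ Iic c) * μ (K' ∩ Iic b) ^ 2
      ≤ gapMass μ t (K' ∩ Iic c) * μ (K' ∩ Iic (max c b)) ^ 2 := by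
        gcongr
        exact le_max_right c b
    _ ≤ gapMass μ t (K' ∩ Iic (max c b)) * μ (K' ∩ Iic c) ^ 2 :=
        hμ.gapMass_mul_sq_le_of_le hK' ht (le_max_left c b) hK
    _ ≤ gapMass μ t K' * μ (K' ∩ Iic c) ^ 2 := by
        gcongr
        exact gapMass_mono inter_subset_left

theorem gapMass_mul_sq_le_of_lower [IsFiniteMeasure μ] (hμ : HasContinuousLogConcaveDensity μ f)
    {K K' : Set ℝ} (hK : K.OrdConnected) (hK' : K'.OrdConnected) (hKK' : K ⊆ K')
    (hdown : ∀ z ∈ K' \ K, ∀ w ∈ K, z ≤ w) (hK0 : 0 < μ K) (ht : 0 ≤ t) :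
    gapMass μ t K * μ K' ^ 2 ≤ gapMass μ t K' * μ K ^ 2 := by
  have hneg : ∀ {I : Set ℝ}, I.OrdConnected → (μ.map Neg.neg) (Neg.neg ⁻¹' I) = μ I :=
    fun hI => by
      rw [Measure.map_apply measurable_neg (hI.measurableSet.preimage measurable_neg)]
      simp
  have h := hμ.map_neg.gapMass_mul_sq_le_of_upper (hK'.preimage_anti fun _ _ => neg_le_neg)
    (preimage_mono hKK') (fun z hz w hw => neg_le_neg_iff.mp (hdown (-z) hz (-w) hw))
    (by rwa [hneg hK]) ht
  rwa [gapMass_map_neg hK.measurableSet, gapMass_map_neg hK'.measurableSet, hneg hK,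
    hneg hK'] at h

theorem gapMass_mul_sq_le [IsFiniteMeasure μ] (hμ : HasContinuousLogConcaveDensity μ f)
    {A B : Set ℝ} (hA : A.OrdConnected) (hB : B.OrdConnected) (hAB : A ⊆ B) (hA0 : 0 < μ A)
    (ht : 0 ≤ t) : gapMass μ t A * μ B ^ 2 ≤ gapMass μ t B * μ A ^ 2 := by
  -- grow `A` downwards to `C`, then `C` upwards to `B`
  set C := {z ∈ B | ∃ w ∈ A, z ≤ w}
  have hAC : A ⊆ C := fun z hz => ⟨hAB hz, z, hz, le_rfl⟩
  have hC : C.OrdConnected := ⟨fun x hx y ⟨hyB, w, hw, hyw⟩ z hz =>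
    ⟨hB.out hx.1 hyB hz, w, hw, hz.2.trans hyw⟩⟩
  have hC0 : μ C ≠ 0 := (hA0.trans_le (measure_mono hAC)).ne'
  have h₁ := hμ.gapMass_mul_sq_le_of_lower hA hC hAC (fun z ⟨⟨_, w₀, hw₀, hzw₀⟩, hzA⟩ w hw =>
    le_of_not_gt fun hwz => hzA (hA.out hw hw₀ ⟨hwz.le, hzw₀⟩)) hA0 ht
  have h₂ := hμ.gapMass_mul_sq_le_of_upper hB (fun z hz => hz.1)
    (fun z ⟨hzB, hzC⟩ w ⟨_, w₀, hw₀, hww₀⟩ => le_of_not_gt fun hzw =>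
      hzC ⟨hzB, w₀, hw₀, hzw.le.trans hww₀⟩) (pos_iff_ne_zero.mpr hC0) ht
  refine (ENNReal.mul_le_mul_iff_left (pow_ne_zero 2 hC0)
    (ENNReal.pow_ne_top (measure_ne_top μ C))).mp ?_
  calc gapMass μ t A * μ B ^ 2 * μ C ^ 2 = gapMass μ t A * μ C ^ 2 * μ B ^ 2 := by ring
    _ ≤ gapMass μ t C * μ A ^ 2 * μ B ^ 2 := by gcongr
    _ = gapMass μ t C * μ B ^ 2 * μ A ^ 2 := by ring
    _ ≤ gapMass μ t B * μ C ^ 2 * μ A ^ 2 := by gcongr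
    _ = gapMass μ t B * μ A ^ 2 * μ C ^ 2 := by ring

theorem cond_abs_sub_gt_le [IsFiniteMeasure μ] (hμ : HasContinuousLogConcaveDensity μ f)
    {A B : Set ℝ} (hA : A.OrdConnected) (hB : B.OrdConnected) (hAB : A ⊆ B) (hA0 : 0 < μ A)
    (τ : ℝ) :
    (μ.prod μ)[|A ×ˢ A] {p | τ < |p.1 - p.2|} ≤ (μ.prod μ)[|B ×ˢ B] {p | τ < |p.1 - p.2|} := by
  have hB0 : 0 < μ B := hA0.trans_le (measure_mono hAB)
  rcases lt_or_ge τ 0 with hτ | hτ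
  · have := isProbabilityMeasure_cond_prod_self hA0.ne'
    have := isProbabilityMeasure_cond_prod_self hB0.ne'
    rw [show {p : ℝ × ℝ | τ < |p.1 - p.2|} = univ from
      eq_univ_of_forall fun p => hτ.trans_le (abs_nonneg _), measure_univ, measure_univ]
  rw [cond_apply (hA.measurableSet.prod hA.measurableSet),
    cond_apply (hB.measurableSet.prod hB.measurableSet),
    measure_prod_abs_sub_gt hA.measurableSet hτ, measure_prod_abs_sub_gt hB.measurableSet hτ,
    Measure.prod_prod, Measure.prod_prod, ← sq, ← sq,
    ENNReal.inv_mul_le_iff (pow_ne_zero 2 hA0.ne') (ENNReal.pow_ne_top (measure_ne_top μ A)),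
    ← ENNReal.mul_le_mul_iff_left (pow_ne_zero 2 hB0.ne') (ENNReal.pow_ne_top (measure_ne_top μ B))]
  calc 2 * gapMass μ τ A * μ B ^ 2 = 2 * (gapMass μ τ A * μ B ^ 2) := mul_assoc _ _ _
    _ ≤ 2 * (gapMass μ τ B * μ A ^ 2) := by
        gcongr 2 * ?_
        exact hμ.gapMass_mul_sq_le hA hB hAB hA0 hτ
    _ = μ A ^ 2 * ((μ B ^ 2)⁻¹ * μ B ^ 2) * (2 * gapMass μ τ B) := by
        rw [ENNReal.inv_mul_cancel (pow_ne_zero 2 hB0.ne')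
          (ENNReal.pow_ne_top (measure_ne_top μ B))]
        ring
    _ = μ A ^ 2 * ((μ B ^ 2)⁻¹ * (2 * gapMass μ τ B)) * μ B ^ 2 := by ring

theorem integral_cond_le [IsFiniteMeasure μ] (hμ : HasContinuousLogConcaveDensity μ f)
    {A B : Set ℝ} (hA : A.OrdConnected) (hB : B.OrdConnected) (hAB : A ⊆ B) (hA0 : 0 < μ A)
    {φ ψ : ℝ → ℝ} (hψ : MonotoneOn ψ (Ici 0)) (hφψ : ∀ u, φ u = ψ |u|)
    (hIA : Integrable (fun p : ℝ × ℝ => φ (p.1 - p.2)) ((μ.prod μ)[|A ×ˢ A]))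
    (hIB : Integrable (fun p : ℝ × ℝ => φ (p.1 - p.2)) ((μ.prod μ)[|B ×ˢ B])) :
    ∫ p, φ (p.1 - p.2) ∂(μ.prod μ)[|A ×ˢ A] ≤ ∫ p, φ (p.1 - p.2) ∂(μ.prod μ)[|B ×ˢ B] := by
  have := isProbabilityMeasure_cond_prod_self hA0.ne'
  have := isProbabilityMeasure_cond_prod_self (hA0.trans_le (measure_mono hAB)).ne'
  simp only [hφψ] at hIA hIB ⊢
  exact integral_comp_le_of_tail_le (by fun_prop) (fun _ => abs_nonneg _)
    (hμ.cond_abs_sub_gt_le hA hB hAB hA0) hψ hIA hIB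

theorem variance_cond_le [IsFiniteMeasure μ] (hμ : HasContinuousLogConcaveDensity μ f)
    {A B : Set ℝ} (hA : A.OrdConnected) (hB : B.OrdConnected) (hAB : A ⊆ B) (hA0 : 0 < μ A)
    (hVA : MemLp id 2 (μ[|A])) (hVB : MemLp id 2 (μ[|B])) :
    variance id (μ[|A]) ≤ variance id (μ[|B]) := by
  have := cond_isProbabilityMeasure hA0.ne'
  have := cond_isProbabilityMeasure (hA0.trans_le (measure_mono hAB)).ne'
  have h := hμ.integral_cond_le hA hB hAB hA0 (φ := (· ^ 2)) (fun a ha b _ hab =>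
    pow_le_pow_left₀ ha hab 2) (fun u => (sq_abs u).symm)
    (by rw [cond_prod_eq_prod_cond]; exact ((hVA.comp_fst _).sub (hVA.comp_snd _)).integrable_sq)
    (by rw [cond_prod_eq_prod_cond]; exact ((hVB.comp_fst _).sub (hVB.comp_snd _)).integrable_sq)
  rw [cond_prod_eq_prod_cond, cond_prod_eq_prod_cond, ← two_mul_variance_eq_integral_sub_sq hVA,
    ← two_mul_variance_eq_integral_sub_sq hVB] at h
  linarith

end HasContinuousLogConcaveDensity

/-- Let `X₁, X₂` be i.i.d. with log-concave differentiable density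
`f`, and `U = X₁ - X₂`. Then for every `φ` increasing in `|u|` (i.e. `φ = ψ ∘ |·|`
with `ψ` increasing on `[0, ∞)`) the conditional expectation
`E(φ(U) | X₁, X₂ ∈ A)` (when defined) satisfies
`E(φ(U) | X₁, X₂ ∈ A) ≤ E(φ(U) | X₁, X₂ ∈ B)` for intervals `A ⊆ B`.
In particular (`φ u = u²/2`) the conditional variance `Var(X | X ∈ A)` is
partially monotonic, and (`φ u = |u|`) so is `E(|X₁ - X₂| | X₁, X₂ ∈ A)`. -/
theorem conditional_expectation_partially_monotone
    (f : ℝ → ℝ) (hf0 : ∀ x, 0 ≤ f x)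
    (hlc : ∀ x y p q : ℝ, 0 ≤ p → 0 ≤ q → p + q = 1 →
      f x ^ p * f y ^ q ≤ f (p * x + q * y))
    (hdiff : Differentiable ℝ f)
    (μ : Measure ℝ) [IsProbabilityMeasure μ]
    (hμ : μ = volume.withDensity (fun x => ENNReal.ofReal (f x)))
    (A B : Set ℝ) (hA : A.OrdConnected) (hB : B.OrdConnected) (hAB : A ⊆ B)
    (hApos : 0 < (μ.prod μ) (A ×ˢ A)) :
    (∀ φ ψ : ℝ → ℝ, MonotoneOn ψ (Ici 0) → (∀ u, φ u = ψ |u|) →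
      Integrable (fun p : ℝ × ℝ => φ (p.1 - p.2)) ((μ.prod μ)[|A ×ˢ A]) →
      Integrable (fun p : ℝ × ℝ => φ (p.1 - p.2)) ((μ.prod μ)[|B ×ˢ B]) →
      (∫ p : ℝ × ℝ, φ (p.1 - p.2) ∂((μ.prod μ)[|A ×ˢ A])) ≤
        ∫ p : ℝ × ℝ, φ (p.1 - p.2) ∂((μ.prod μ)[|B ×ˢ B])) ∧
    (MemLp id 2 (μ[|A]) → MemLp id 2 (μ[|B]) →
      variance id (μ[|A]) ≤ variance id (μ[|B])) ∧
    (Integrable (fun p : ℝ × ℝ => |p.1 - p.2|) ((μ.prod μ)[|A ×ˢ A]) →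
      Integrable (fun p : ℝ × ℝ => |p.1 - p.2|) ((μ.prod μ)[|B ×ˢ B]) →
      (∫ p : ℝ × ℝ, |p.1 - p.2| ∂((μ.prod μ)[|A ×ˢ A])) ≤
        ∫ p : ℝ × ℝ, |p.1 - p.2| ∂((μ.prod μ)[|B ×ˢ B])) := by
  have hdens : HasContinuousLogConcaveDensity μ f := ⟨⟨hf0, hdiff.continuous, hμ⟩, hlc⟩
  have hA0 : 0 < μ A := pos_of_ne_zero fun h => by simp [Measure.prod_prod, h] at hApos
  exact ⟨fun φ ψ hψ hφψ => hdens.integral_cond_le hA hB hAB hA0 hψ hφψ,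
    hdens.variance_cond_le hA hB hAB hA0,
    hdens.integral_cond_le hA hB hAB hA0 monotoneOn_id fun _ => rfl⟩
end
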